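/- arXiv:2407.05997 — 7 statements merged into one kernel-verified Lean document; each statement's English description precedes it below -/
import Mathlib

section
/- The φ-divergence is jointly lower semicontinuous: the function (s,t) ↦ D_φ(s∣t) from [0,∞)^m × [0,∞)^m to ℝ ∪ {∞} is lower semicontinuous (with respect to the product topology on [0,∞)^m × [0,∞)^m and the order topology on ℝ ∪ {∞}). -/
/-!
The integrand `f` is the perspective of `φ`, and it is the pointwise supremum of the linear forms
`(v, w) ↦ c v + c' w` over the affine minorants `x ↦ c x + c'` of `φ` on `[0, ∞)`: every such
minorant has `c ≤ L`, so the forms lie below `f`; conversely, since `φ` is convex and continuous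
on `[0, ∞)` it has affine minorants through any point below its graph, and the limit `L` is
approached by the slopes of affine minorants. A supremum of continuous functions is lower
semicontinuous, and so is a finite sum of lower semicontinuous functions that avoid `⊥`.
-/

open Filter Topology

/-- The extended-real-valued integrand `f(v,w)` of a `φ`-divergence:
`f(v,w) = w·φ(v/w)` if `w > 0`, `f(v,0) = v·L` if `v > 0`, and `f(0,0) = 0`,
where `L = lim_{x→∞} φ(x)/x ∈ ℝ ∪ {∞}`. -/
noncomputable def phiF (φ : ℝ → ℝ) (L : EReal) (v w : ℝ) : EReal :=
  if 0 < w then ((w * φ (v / w) : ℝ) : EReal)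
  else if 0 < v then (v : EReal) * L
  else 0

/-- The `φ`-divergence `D_φ(s∣t) = Σ_{i=1}^m f(s_i, t_i)` of `s` relative to `t`. -/
noncomputable def Dphi (φ : ℝ → ℝ) (L : EReal) {m : ℕ} (s t : Fin m → ℝ) : EReal :=
  ∑ i, phiF φ L (s i) (t i)

open Set

theorem lowerSemicontinuousOn_ereal_sum {α ι : Type*} [TopologicalSpace α] {S : Set α}
    (s : Finset ι) (f : ι → α → EReal) (hf : ∀ i ∈ s, LowerSemicontinuousOn (f i) S)
    (hbot : ∀ i ∈ s, ∀ x ∈ S, f i x ≠ ⊥) :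
    LowerSemicontinuousOn (fun x => ∑ i ∈ s, f i x) S := by
  classical
  induction s using Finset.induction_on with
  | empty => exact lowerSemicontinuousOn_const
  | insert i s hi ih =>
    simp only [Finset.sum_insert hi]
    refine (hf i (s.mem_insert_self i)).add'
      (ih (fun j hj => hf j (Finset.mem_insert_of_mem hj))
        (fun j hj => hbot j (Finset.mem_insert_of_mem hj))) fun x hx => ?_
    have hsum : ∑ j ∈ s, f j x ≠ ⊥ :=
      (WithBot.sum_lt_bot fun j hj => hbot j (Finset.mem_insert_of_mem hj) x hx).ne'
    exact EReal.continuousAt_add (Or.inr hsum) (Or.inl (hbot i (s.mem_insert_self i) x hx))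

section Perspective

variable {φ : ℝ → ℝ} {L : EReal}

theorem coe_le_of_affine_le_of_tendsto_div
    (hL : Tendsto (fun x : ℝ => ((φ x / x : ℝ) : EReal)) atTop (𝓝 L)) {c c' : ℝ}
    (hcφ : ∀ x ∈ Ici (0 : ℝ), c * x + c' ≤ φ x) : (c : EReal) ≤ L := by
  have hlim : Tendsto (fun x : ℝ => ((c + c' / x : ℝ) : EReal)) atTop (𝓝 c) := by
    have h0 : Tendsto (fun x : ℝ => c' / x) atTop (𝓝 0) :=
      tendsto_const_nhds.div_atTop tendsto_id
    refine (continuous_coe_real_ereal.tendsto c).comp ?_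
    simpa using (tendsto_const_nhds (x := c)).add h0
  refine le_of_tendsto_of_tendsto hlim hL ?_
  filter_upwards [eventually_gt_atTop 0] with x hx
  rw [EReal.coe_le_coe_iff, add_div' _ _ _ hx.ne', div_le_div_iff_of_pos_right hx]
  exact hcφ x hx.le

theorem ConvexOn.exists_affine_le_with_slope_gt (hφ : ConvexOn ℝ (Ici 0) φ)
    (hφc : ContinuousOn φ (Ici 0))
    (hL : Tendsto (fun x : ℝ => ((φ x / x : ℝ) : EReal)) atTop (𝓝 L)) {z : ℝ}
    (hz : (z : EReal) < L) : ∃ c c' : ℝ, z < c ∧ ∀ x ∈ Ici (0 : ℝ), c * x + c' ≤ φ x := by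
  obtain ⟨z', hzz', hz'L⟩ := EReal.exists_between_coe_real hz
  have hzz' : z < z' := EReal.coe_lt_coe_iff.1 hzz'
  have hlarge : ∀ᶠ b : ℝ in atTop, (z' : EReal) < ((φ b / b : ℝ) : EReal) ∧
      (1 + φ 0) / (z' - z) < b ∧ 0 < b :=
    (hL.eventually (eventually_gt_nhds hz'L)).and
      ((eventually_gt_atTop _).and (eventually_gt_atTop 0))
  obtain ⟨b, hzb, hb, hb0⟩ := hlarge.exists
  rw [EReal.coe_lt_coe_iff, lt_div_iff₀ hb0] at hzb
  rw [div_lt_iff₀ (sub_pos.2 hzz')] at hb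
  -- an affine minorant passing within `1` of `(b, φ b)` has slope at least `(φ b - 1 - φ 0) / b`
  obtain ⟨c, c', hcφ, hcb⟩ := hφ.exists_affine_le_of_lt_real (a := φ b - 1) hb0.le
    (sub_one_lt _) isClosed_Ici hφc.lowerSemicontinuousOn
  have hc'0 : c' ≤ φ 0 := by simpa using hcφ 0 self_mem_Ici
  have hzc : z * b < c * b := by linarith
  exact ⟨c, c', lt_of_mul_lt_mul_right hzc hb0.le, hcφ⟩

theorem affine_le_phiF (hL : Tendsto (fun x : ℝ => ((φ x / x : ℝ) : EReal)) atTop (𝓝 L))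
    {c c' : ℝ} (hcφ : ∀ x ∈ Ici (0 : ℝ), c * x + c' ≤ φ x) {v w : ℝ} (hv : 0 ≤ v) (hw : 0 ≤ w) :
    ((c * v + c' * w : ℝ) : EReal) ≤ phiF φ L v w := by
  unfold phiF
  split_ifs with hw0 hv0
  · rw [EReal.coe_le_coe_iff]
    have h := mul_le_mul_of_nonneg_left (hcφ (v / w) (div_nonneg hv hw)) hw
    rwa [mul_add, mul_left_comm, mul_div_cancel₀ _ hw0.ne', mul_comm w c'] at h
  · rw [le_antisymm (not_lt.1 hw0) hw, mul_zero, add_zero, EReal.coe_mul, mul_comm]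
    exact mul_le_mul_of_nonneg_left (coe_le_of_affine_le_of_tendsto_div hL hcφ)
      (EReal.coe_nonneg.2 hv)
  · simp [le_antisymm (not_lt.1 hw0) hw, le_antisymm (not_lt.1 hv0) hv]

theorem phiF_ne_bot (hφ : ConvexOn ℝ (Ici 0) φ) (hφc : ContinuousOn φ (Ici 0))
    (hL : Tendsto (fun x : ℝ => ((φ x / x : ℝ) : EReal)) atTop (𝓝 L)) {v w : ℝ}
    (hv : 0 ≤ v) (hw : 0 ≤ w) : phiF φ L v w ≠ ⊥ := by
  obtain ⟨c, c', hcφ⟩ := hφ.exists_affine_le_real isClosed_Ici hφc.lowerSemicontinuousOn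
  exact ne_bot_of_le_ne_bot (EReal.coe_ne_bot _) (affine_le_phiF hL hcφ hv hw)

theorem ConvexOn.exists_affine_le_lt_phiF (hφ : ConvexOn ℝ (Ici 0) φ)
    (hφc : ContinuousOn φ (Ici 0))
    (hL : Tendsto (fun x : ℝ => ((φ x / x : ℝ) : EReal)) atTop (𝓝 L)) {v w y : ℝ}
    (hv : 0 ≤ v) (hw : 0 ≤ w) (hy : (y : EReal) < phiF φ L v w) :
    ∃ c c' : ℝ, (∀ x ∈ Ici (0 : ℝ), c * x + c' ≤ φ x) ∧ y < c * v + c' * w := by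
  unfold phiF at hy
  split_ifs at hy with hw0 hv0
  · rw [EReal.coe_lt_coe_iff, ← div_lt_iff₀' hw0] at hy
    obtain ⟨a, hya, haφ⟩ := exists_between hy
    obtain ⟨c, c', hcφ, hca⟩ := hφ.exists_affine_le_of_lt_real (div_nonneg hv hw) haφ
      isClosed_Ici hφc.lowerSemicontinuousOn
    refine ⟨c, c', hcφ, ?_⟩
    rw [div_lt_iff₀' hw0] at hya
    have hcw : c * v + c' * w = w * a := by rw [← hca]; field_simp
    linarith
  · have hyL : ((y / v : ℝ) : EReal) < L := by
      by_contra! hLy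
      have h := mul_le_mul_of_nonneg_left hLy (EReal.coe_nonneg.2 hv)
      rw [← EReal.coe_mul, mul_div_cancel₀ _ hv0.ne'] at h
      exact h.not_gt hy
    obtain ⟨c, c', hcyv, hcφ⟩ := hφ.exists_affine_le_with_slope_gt hφc hL hyL
    refine ⟨c, c', hcφ, ?_⟩
    rw [le_antisymm (not_lt.1 hw0) hw, mul_zero, add_zero]
    exact (div_lt_iff₀ hv0).1 hcyv
  · obtain ⟨c, c', hcφ⟩ := hφ.exists_affine_le_real isClosed_Ici hφc.lowerSemicontinuousOn
    refine ⟨c, c', hcφ, ?_⟩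
    simpa [le_antisymm (not_lt.1 hw0) hw, le_antisymm (not_lt.1 hv0) hv] using hy

theorem ConvexOn.lowerSemicontinuousOn_phiF (hφ : ConvexOn ℝ (Ici 0) φ)
    (hφc : ContinuousOn φ (Ici 0))
    (hL : Tendsto (fun x : ℝ => ((φ x / x : ℝ) : EReal)) atTop (𝓝 L)) :
    LowerSemicontinuousOn (fun p : ℝ × ℝ => phiF φ L p.1 p.2) {p | 0 ≤ p.1 ∧ 0 ≤ p.2} := by
  rintro p ⟨hv, hw⟩ y hy
  obtain ⟨y', hyy', hy'⟩ := EReal.exists_between_coe_real hy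
  obtain ⟨c, c', hcφ, hy'c⟩ := hφ.exists_affine_le_lt_phiF hφc hL hv hw hy'
  have hlin : Continuous fun q : ℝ × ℝ => ((c * q.1 + c' * q.2 : ℝ) : EReal) :=
    continuous_coe_real_ereal.comp (by fun_prop)
  have hnear : ∀ᶠ q : ℝ × ℝ in 𝓝 p, y < ((c * q.1 + c' * q.2 : ℝ) : EReal) :=
    hlin.continuousAt.eventually (eventually_gt_nhds (hyy'.trans (EReal.coe_lt_coe hy'c)))
  filter_upwards [nhdsWithin_le_nhds hnear, self_mem_nhdsWithin] with q hq ⟨hq1, hq2⟩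
  exact hq.trans_le (affine_le_phiF hL hcφ hq1 hq2)

end Perspective

theorem statement0_general (m : ℕ) (φ : ℝ → ℝ) (L : EReal)
    (hφconv : ConvexOn ℝ (Set.Ici 0) φ)
    (hφ0 : ContinuousWithinAt φ (Set.Ici 0) 0)
    (hL : Tendsto (fun x : ℝ => ((φ x / x : ℝ) : EReal)) atTop (𝓝 L)) :
    LowerSemicontinuousOn
      (fun p : (Fin m → ℝ) × (Fin m → ℝ) => Dphi φ L p.1 p.2)
      {p : (Fin m → ℝ) × (Fin m → ℝ) | (∀ i, 0 ≤ p.1 i) ∧ (∀ i, 0 ≤ p.2 i)} := by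
  have hφc := hφconv.continuousOn_Ici hφ0
  have hterm (i : Fin m) : LowerSemicontinuousOn
      (fun p : (Fin m → ℝ) × (Fin m → ℝ) => phiF φ L (p.1 i) (p.2 i))
      {p | (∀ i, 0 ≤ p.1 i) ∧ (∀ i, 0 ≤ p.2 i)} :=
    (hφconv.lowerSemicontinuousOn_phiF hφc hL).comp
      (g := fun p : (Fin m → ℝ) × (Fin m → ℝ) => (p.1 i, p.2 i)) (by fun_prop)
      fun p hp => ⟨hp.1 i, hp.2 i⟩
  exact lowerSemicontinuousOn_ereal_sum Finset.univ _ (fun i _ => hterm i)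
    fun i _ p hp => phiF_ne_bot hφconv hφc hL (hp.1 i) (hp.2 i)

/-- the map `(s,t) ↦ D_φ(s∣t)` is lower semicontinuous on
`[0,∞)^m × [0,∞)^m`. -/
theorem statement0 (m : ℕ) (hm : 1 ≤ m) (φ : ℝ → ℝ) (L : EReal)
    (hφconv : ConvexOn ℝ (Set.Ici 0) φ)
    (hφ0 : ContinuousWithinAt φ (Set.Ici 0) 0)
    (hL : Tendsto (fun x : ℝ => ((φ x / x : ℝ) : EReal)) atTop (𝓝 L)) :
    LowerSemicontinuousOn
      (fun p : (Fin m → ℝ) × (Fin m → ℝ) => Dphi φ L p.1 p.2)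
      {p : (Fin m → ℝ) × (Fin m → ℝ) | (∀ i, 0 ≤ p.1 i) ∧ (∀ i, 0 ≤ p.2 i)} :=
  statement0_general m φ L hφconv hφ0 hL
end

section
/- For every fixed s ∈ [0,∞)^m, the function t ↦ D_φ(s∣t) from [0,∞)^m to ℝ ∪ {∞} is continuous on [0,∞)^m (with the order topology on ℝ ∪ {∞}). -/
/-!
Each summand `w ↦ f(s_i, w)` is continuous on `[0, ∞)`: away from `w = 0` it is `w φ(s_i / w)`
with `φ` continuous on the interior of its convex domain, and as `w → 0⁺` it equals
`s_i · (φ(x) / x)` at `x = s_i / w → ∞`, which tends to `s_i L`. Convexity bounds `φ(x) / x`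
below by an affine secant, so `L ≠ ⊥` and no summand takes the value `⊥`; addition on `EReal`
is continuous away from `⊥ + ⊤`, so the finite sum is continuous.
-/

open Filter Topology

open Set

lemma ConvexOn.sub_add_div_le_div {φ : ℝ → ℝ} (hφ : ConvexOn ℝ (Ici 0) φ) {x : ℝ}
    (hx : 1 ≤ x) : φ 1 - φ 0 + φ 0 / x ≤ φ x / x := by
  have hx0 : 0 < x := by linarith
  have hsecant := hφ.secant_mono (a := 0) (x := 1) (y := x) self_mem_Ici
    (mem_Ici.mpr zero_le_one) (mem_Ici.mpr hx0.le) one_ne_zero hx0.ne' hx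
  rw [sub_zero, sub_zero, div_one, sub_div] at hsecant
  linarith

lemma ConvexOn.sub_le_of_tendsto_div_atTop {φ : ℝ → ℝ} {L : EReal}
    (hφ : ConvexOn ℝ (Ici 0) φ)
    (hL : Tendsto (fun x : ℝ => ((φ x / x : ℝ) : EReal)) atTop (𝓝 L)) :
    ((φ 1 - φ 0 : ℝ) : EReal) ≤ L := by
  have hsecant : Tendsto (fun x : ℝ => ((φ 1 - φ 0 + φ 0 / x : ℝ) : EReal)) atTop
      (𝓝 ((φ 1 - φ 0 : ℝ) : EReal)) := by
    rw [EReal.tendsto_coe]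
    have hdecay : Tendsto (fun x : ℝ => φ 0 / x) atTop (𝓝 0) :=
      tendsto_const_nhds.div_atTop tendsto_id
    simpa using tendsto_const_nhds.add hdecay
  refine le_of_tendsto_of_tendsto hsecant hL (eventually_atTop.mpr ⟨1, fun x hx => ?_⟩)
  exact EReal.coe_le_coe_iff.mpr (hφ.sub_add_div_le_div hx)

lemma phiF_ne_bot_s1 {φ : ℝ → ℝ} {L : EReal} (hL : L ≠ ⊥) (v w : ℝ) : phiF φ L v w ≠ ⊥ := by
  unfold phiF
  split_ifs with hw hv
  · exact EReal.coe_ne_bot _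
  · induction L with
    | bot => exact absurd rfl hL
    | coe r => rw [← EReal.coe_mul]; exact EReal.coe_ne_bot _
    | top => rw [EReal.coe_mul_top_of_pos hv]; exact bot_lt_top.ne'
  · exact EReal.zero_ne_bot

lemma phiF_of_pos (φ : ℝ → ℝ) (L : EReal) (v : ℝ) {w : ℝ} (hw : 0 < w) :
    phiF φ L v w = ((w * φ (v / w) : ℝ) : EReal) :=
  if_pos hw

lemma phiF_zero_left (φ : ℝ → ℝ) (L : EReal) {w : ℝ} (hw : 0 ≤ w) :
    phiF φ L 0 w = ((w * φ 0 : ℝ) : EReal) := by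
  rcases hw.eq_or_lt with rfl | hw
  · simp [phiF]
  · rw [phiF_of_pos φ L 0 hw, zero_div]

lemma continuousOn_phiF_Ioi {φ : ℝ → ℝ} (L : EReal) (hφ : ContinuousOn φ (Ioi 0))
    {v : ℝ} (hv : 0 < v) : ContinuousOn (phiF φ L v) (Ioi 0) := by
  intro w hw
  have hcoe : ContinuousAt (fun w : ℝ => ((w * φ (v / w) : ℝ) : EReal)) w := by
    refine continuous_coe_real_ereal.continuousAt.comp (continuousAt_id.mul ?_)
    exact (hφ.continuousAt (Ioi_mem_nhds (div_pos hv hw))).comp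
      (continuousAt_const.div continuousAt_id (ne_of_gt hw))
  refine (hcoe.congr ?_).continuousWithinAt
  filter_upwards [Ioi_mem_nhds hw] with x hx
  exact (phiF_of_pos φ L v hx).symm

lemma tendsto_phiF_nhdsGT_zero {φ : ℝ → ℝ} {L : EReal}
    (hL : Tendsto (fun x : ℝ => ((φ x / x : ℝ) : EReal)) atTop (𝓝 L)) {v : ℝ} (hv : 0 < v) :
    Tendsto (phiF φ L v) (𝓝[>] 0) (𝓝 ((v : EReal) * L)) := by
  have hv' : (v : EReal) ≠ 0 := by exact_mod_cast hv.ne'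
  have hmul : ContinuousAt (fun p : EReal × EReal => p.1 * p.2) ((v : EReal), L) :=
    EReal.continuousAt_mul (Or.inl hv') (Or.inl hv') (Or.inl (EReal.coe_ne_bot v))
      (Or.inl (EReal.coe_ne_top v))
  have hratio : Tendsto (fun w : ℝ => v / w) (𝓝[>] 0) atTop := by
    simpa [div_eq_mul_inv] using tendsto_inv_nhdsGT_zero.const_mul_atTop hv
  refine (hmul.tendsto.comp (tendsto_const_nhds.prodMk_nhds (hL.comp hratio))).congr' ?_
  filter_upwards [self_mem_nhdsWithin] with w (hw : 0 < w)
  have hvw : v * (φ (v / w) / (v / w)) = w * φ (v / w) := by field_simp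
  simp only [Function.comp_apply, ← EReal.coe_mul, hvw, phiF_of_pos φ L v hw]

lemma continuousOn_phiF {φ : ℝ → ℝ} {L : EReal} (hφ : ConvexOn ℝ (Ici 0) φ)
    (hL : Tendsto (fun x : ℝ => ((φ x / x : ℝ) : EReal)) atTop (𝓝 L)) {v : ℝ} (hv : 0 ≤ v) :
    ContinuousOn (phiF φ L v) (Ici 0) := by
  rcases hv.eq_or_lt with rfl | hv
  · refine ContinuousOn.congr ?_ fun w hw => phiF_zero_left φ L hw
    exact (continuous_coe_real_ereal.comp (continuous_id.mul continuous_const)).continuousOn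
  have hφ_Ioi : ContinuousOn φ (Ioi 0) := by
    simpa only [interior_Ici] using hφ.continuousOn_interior
  have hIoi := continuousOn_phiF_Ioi L hφ_Ioi hv
  intro w hw
  rcases (mem_Ici.mp hw).eq_or_lt with rfl | hw
  · rw [← Ioi_insert, continuousWithinAt_insert_self, ContinuousWithinAt]
    have hval : phiF φ L v 0 = (v : EReal) * L := if_neg (lt_irrefl 0) |>.trans (if_pos hv)
    exact hval ▸ tendsto_phiF_nhdsGT_zero hL hv
  · exact (hIoi.continuousAt (Ioi_mem_nhds hw)).continuousWithinAt

lemma continuousWithinAt_finset_sum_ereal {α ι : Type*} [TopologicalSpace α] {S : Set α}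
    {x : α} (u : Finset ι) {F : ι → α → EReal} (hF : ∀ i ∈ u, ContinuousWithinAt (F i) S x)
    (hbot : ∀ i ∈ u, F i x ≠ ⊥) : ContinuousWithinAt (fun y => ∑ i ∈ u, F i y) S x := by
  classical
  induction u using Finset.induction_on with
  | empty => simpa using continuousWithinAt_const
  | @insert a u ha ih =>
    simp only [Finset.sum_insert ha]
    have hsum_ne_bot : ∑ i ∈ u, F i x ≠ ⊥ := fun h => by
      obtain ⟨i, hi, hi_bot⟩ := WithBot.sum_eq_bot_iff.mp h
      exact hbot i (Finset.mem_insert_of_mem hi) hi_bot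
    have hadd : ContinuousAt (fun p : EReal × EReal => p.1 + p.2) (F a x, ∑ i ∈ u, F i x) :=
      EReal.continuousAt_add (Or.inr hsum_ne_bot) (Or.inl (hbot a (Finset.mem_insert_self a u)))
    exact hadd.tendsto.comp ((hF a (Finset.mem_insert_self a u)).prodMk_nhds
      (ih (fun i hi => hF i (Finset.mem_insert_of_mem hi))
        (fun i hi => hbot i (Finset.mem_insert_of_mem hi))))

theorem statement1_general (m : ℕ) (φ : ℝ → ℝ) (L : EReal)
    (hφconv : ConvexOn ℝ (Set.Ici 0) φ)
    (hL : Tendsto (fun x : ℝ => ((φ x / x : ℝ) : EReal)) atTop (𝓝 L))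
    (s : Fin m → ℝ) (hs : ∀ i, 0 ≤ s i) :
    ContinuousOn (fun t : Fin m → ℝ => Dphi φ L s t)
      {t : Fin m → ℝ | ∀ i, 0 ≤ t i} := by
  have hL_ne_bot : L ≠ ⊥ :=
    ne_bot_of_le_ne_bot (EReal.coe_ne_bot _) (hφconv.sub_le_of_tendsto_div_atTop hL)
  intro t ht
  refine continuousWithinAt_finset_sum_ereal Finset.univ (fun i _ => ?_)
    (fun i _ => phiF_ne_bot_s1 hL_ne_bot _ _)
  exact (continuousOn_phiF hφconv hL (hs i) (t i) (ht i)).comp (f := fun y : Fin m → ℝ => y i)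
    (continuous_apply i).continuousWithinAt fun y hy => hy i

/-- for fixed `s ∈ [0,∞)^m`, the map `t ↦ D_φ(s∣t)` is continuous
on `[0,∞)^m`. -/
theorem statement1 (m : ℕ) (hm : 1 ≤ m) (φ : ℝ → ℝ) (L : EReal)
    (hφconv : ConvexOn ℝ (Set.Ici 0) φ)
    (hφ0 : ContinuousWithinAt φ (Set.Ici 0) 0)
    (hL : Tendsto (fun x : ℝ => ((φ x / x : ℝ) : EReal)) atTop (𝓝 L))
    (s : Fin m → ℝ) (hs : ∀ i, 0 ≤ s i) :
    ContinuousOn (fun t : Fin m → ℝ => Dphi φ L s t)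
      {t : Fin m → ℝ | ∀ i, 0 ≤ t i} :=
  statement1_general m φ L hφconv hL s hs
end

section
/- Fix t ∈ [0,∞)^m with t ≠ 0. On the convex set {s ∈ [0,∞)^m : supp(s) ⊆ supp(t)} the function s ↦ D_φ(s∣t) is real-valued, and it is strictly convex on this set if and only if φ is strictly convex. -/
open Filter Topology

/-- Coercion `ℝ → EReal` as an additive monoid hom. -/
noncomputable def erealCoeHom : ℝ →+ EReal :=
  { toFun := fun x => (x : EReal), map_zero' := rfl, map_add' := fun x y => EReal.coe_add x y }

/-- for fixed `t ∈ [0,∞)^m`, `t ≠ 0`, the function `s ↦ D_φ(s∣t)` is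
real-valued on the convex set `{s ∈ [0,∞)^m : supp(s) ⊆ supp(t)}`, and it is
strictly convex on this set if and only if `φ` is strictly convex. -/
theorem statement2 (m : ℕ) (hm : 1 ≤ m) (φ : ℝ → ℝ) (L : EReal)
    (hφconv : ConvexOn ℝ (Set.Ici 0) φ)
    (hφ0 : ContinuousWithinAt φ (Set.Ici 0) 0)
    (hL : Tendsto (fun x : ℝ => ((φ x / x : ℝ) : EReal)) atTop (𝓝 L))
    (t : Fin m → ℝ) (ht : ∀ i, 0 ≤ t i) (ht0 : t ≠ 0) :
    (∀ s ∈ {s : Fin m → ℝ | (∀ i, 0 ≤ s i) ∧ ∀ i, 0 < s i → 0 < t i},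
        ∃ r : ℝ, Dphi φ L s t = (r : EReal)) ∧
    (StrictConvexOn ℝ {s : Fin m → ℝ | (∀ i, 0 ≤ s i) ∧ ∀ i, 0 < s i → 0 < t i}
        (fun s => (Dphi φ L s t).toReal) ↔
      StrictConvexOn ℝ (Set.Ici (0 : ℝ)) φ) := by
  classical
  set S : Set (Fin m → ℝ) :=
    {s : Fin m → ℝ | (∀ i, 0 ≤ s i) ∧ ∀ i, 0 < s i → 0 < t i} with hSdef
  set g : Fin m → ℝ → ℝ := fun i x => if 0 < t i then t i * φ (x / t i) else 0 with hg
  have hzero : ∀ s ∈ S, ∀ i, ¬ 0 < t i → s i = 0 := by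
    intro s hs i hti
    exact le_antisymm (not_lt.mp fun h => hti (hs.2 i h)) (hs.1 i)
  have hterm : ∀ s ∈ S, ∀ i, phiF φ L (s i) (t i) = ((g i (s i) : ℝ) : EReal) := by
    intro s hs i
    unfold phiF
    by_cases hti : 0 < t i
    · simp [hg, hti]
    · have hsi : s i = 0 := hzero s hs i hti
      simp [hg, hti, hsi]
  have key : ∀ s ∈ S, Dphi φ L s t = ((∑ i, g i (s i) : ℝ) : EReal) := by
    intro s hs
    unfold Dphi
    rw [Finset.sum_congr rfl fun i _ => hterm s hs i]
    exact (map_sum erealCoeHom (fun i => g i (s i)) Finset.univ).symm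
  have hF : ∀ s ∈ S, (Dphi φ L s t).toReal = ∑ i, g i (s i) := by
    intro s hs; rw [key s hs, EReal.toReal_coe]
  have hSconv : Convex ℝ S := by
    intro s hs s' hs' a b ha hb hab
    constructor
    · intro i
      have : (a • s + b • s') i = a * s i + b * s' i := rfl
      rw [this]
      exact add_nonneg (mul_nonneg ha (hs.1 i)) (mul_nonneg hb (hs'.1 i))
    · intro i hi
      by_contra hti
      have h1 : s i = 0 := hzero s hs i hti
      have h2 : s' i = 0 := hzero s' hs' i hti
      have : (a • s + b • s') i = a * s i + b * s' i := rfl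
      rw [this, h1, h2] at hi
      simp at hi
  refine ⟨fun s hs => ⟨∑ i, g i (s i), key s hs⟩, ?_, ?_⟩
  · -- forward: D strictly convex ⇒ φ strictly convex
    intro hD
    refine ⟨convex_Ici 0, ?_⟩
    intro x hx y hy hxy a b ha hb hab
    obtain ⟨i₀, hi₀⟩ : ∃ i, 0 < t i := by
      by_contra h
      push_neg at h
      exact ht0 (funext fun i => le_antisymm (h i) (ht i))
    set e : ℝ → Fin m → ℝ := fun z i => if i = i₀ then t i₀ * z else 0 with he
    have heS : ∀ z, 0 ≤ z → e z ∈ S := by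
      intro z hz
      constructor
      · intro i
        by_cases hi : i = i₀ <;> simp [he, hi]
        exact mul_nonneg hi₀.le hz
      · intro i hi
        by_cases h : i = i₀
        · exact h ▸ hi₀
        · simp [he, h] at hi
    set C : ℝ := ∑ i ∈ Finset.univ.erase i₀, g i 0 with hC
    have heF : ∀ z, 0 ≤ z → (Dphi φ L (e z) t).toReal = t i₀ * φ z + C := by
      intro z hz
      rw [hF _ (heS z hz), ← Finset.add_sum_erase _ _ (Finset.mem_univ i₀)]
      congr 1
      · simp [he, hg, hi₀, mul_div_cancel_left₀ z (ne_of_gt hi₀)]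
      · exact Finset.sum_congr rfl fun i hi => by
          simp [he, Finset.ne_of_mem_erase hi]
    have hlin : a • e x + b • e y = e (a * x + b * y) := by
      funext i
      by_cases hi : i = i₀ <;> simp [he, hi, mul_add] <;> ring
    have hne : e x ≠ e y := by
      intro h
      have h2 : t i₀ * x = t i₀ * y := by
        have := congrFun h i₀
        simpa only [he, if_pos rfl] using this
      exact hxy (mul_left_cancel₀ (ne_of_gt hi₀) h2)
    have hxy0 : 0 ≤ a * x + b * y :=
      add_nonneg (mul_nonneg ha.le hx) (mul_nonneg hb.le hy)
    have hlt := hD.2 (heS x hx) (heS y hy) hne ha hb hab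
    simp only [smul_eq_mul] at hlt ⊢
    rw [hlin, heF _ hxy0, heF _ hx, heF _ hy] at hlt
    have hre : a * (t i₀ * φ x + C) + b * (t i₀ * φ y + C)
        = t i₀ * (a * φ x + b * φ y) + C := by linear_combination C * hab
    rw [hre] at hlt
    have h1 : t i₀ * φ (a * x + b * y) < t i₀ * (a * φ x + b * φ y) := by linarith
    exact lt_of_mul_lt_mul_left h1 hi₀.le
  · -- backward: φ strictly convex ⇒ D strictly convex
    intro hφ
    refine ⟨hSconv, ?_⟩
    intro s hs s' hs' hne a b ha hb hab
    have hcomb : a • s + b • s' ∈ S := hSconv hs hs' ha.le hb.le hab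
    simp only [smul_eq_mul]
    rw [hF s hs, hF s' hs', hF _ hcomb]
    have happ : ∀ i, (a • s + b • s') i = a * s i + b * s' i := fun i => rfl
    rw [Finset.mul_sum, Finset.mul_sum, ← Finset.sum_add_distrib]
    apply Finset.sum_lt_sum
    · intro i _
      rw [happ i]
      by_cases hti : 0 < t i
      · have h1 : (0:ℝ) ≤ s i / t i := div_nonneg (hs.1 i) hti.le
        have h2 : (0:ℝ) ≤ s' i / t i := div_nonneg (hs'.1 i) hti.le
        have h4 := hφ.convexOn.2 h1 h2 ha.le hb.le hab
        have h5 : (a * s i + b * s' i) / t i = a * (s i / t i) + b * (s' i / t i) := by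
          field_simp
        have h6 := mul_le_mul_of_nonneg_left h4 hti.le
        simp only [hg, if_pos hti, h5]
        calc t i * φ (a * (s i / t i) + b * (s' i / t i))
            ≤ t i * (a * φ (s i / t i) + b * φ (s' i / t i)) := h6
          _ = a * (t i * φ (s i / t i)) + b * (t i * φ (s' i / t i)) := by ring
      · simp [hg, hti, hab]
    · obtain ⟨i, hi⟩ : ∃ i, s i ≠ s' i := Function.ne_iff.mp hne
      refine ⟨i, Finset.mem_univ i, ?_⟩
      have hti : 0 < t i := by
        by_contra h
        exact hi ((hzero s hs i h).trans (hzero s' hs' i h).symm)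
      rw [happ i]
      have h1 : (0:ℝ) ≤ s i / t i := div_nonneg (hs.1 i) hti.le
      have h2 : (0:ℝ) ≤ s' i / t i := div_nonneg (hs'.1 i) hti.le
      have h3 : s i / t i ≠ s' i / t i := fun h =>
        hi (by rw [← div_mul_cancel₀ (s i) (ne_of_gt hti),
          ← div_mul_cancel₀ (s' i) (ne_of_gt hti), h])
      have h4 := hφ.2 h1 h2 h3 ha hb hab
      have h5 : (a * s i + b * s' i) / t i = a * (s i / t i) + b * (s' i / t i) := by
        field_simp
      have h6 := mul_lt_mul_of_pos_left h4 hti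
      simp only [hg, if_pos hti, h5]
      calc t i * φ (a * (s i / t i) + b * (s' i / t i))
          < t i * (a * φ (s i / t i) + b * φ (s' i / t i)) := h6
        _ = a * (t i * φ (s i / t i)) + b * (t i * φ (s' i / t i)) := by ring
end

section
/- Assume φ is strictly convex. Let t ∈ [0,1]^m and let M be a nonempty closed convex subset of [0,1]^m such that supp(s) ⊆ supp(t) for every s ∈ M. Then the φ-projection of t on M exists and is unique: there is exactly one s* ∈ M with D_φ(s*∣t) = inf_{s∈M} D_φ(s∣t). -/
open Filter Topology

/-- `p` is a `φ`-projection of `t` on `M`: `p ∈ M` and `D_φ(p∣t) = inf_{s ∈ M} D_φ(s∣t)`. -/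
def IsPhiProj (φ : ℝ → ℝ) (L : EReal) {m : ℕ} (M : Set (Fin m → ℝ))
    (t p : Fin m → ℝ) : Prop :=
  p ∈ M ∧ Dphi φ L p t = ⨅ s ∈ M, Dphi φ L s t

/-! On `M` the support condition rules out the branch `f(v,0) = v·L`, so `D_φ(·∣t)` is the finite
sum `Σ_{t_i > 0} t_i φ(s_i/t_i)`. It is continuous on the compact set `M`, hence attains its
minimum, and strictly convex there, because two points of `M` can only differ in coordinates
with `t_i > 0`; so the minimizer is unique. -/

open Set

@[norm_cast]
lemma EReal.coe_finsetSum {ι : Type*} (s : Finset ι) (f : ι → ℝ) :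
    ((∑ i ∈ s, f i : ℝ) : EReal) = ∑ i ∈ s, (f i : EReal) :=
  map_sum (⟨⟨Real.toEReal, EReal.coe_zero⟩, EReal.coe_add⟩ : ℝ →+ EReal) f s

noncomputable def realPhiF (φ : ℝ → ℝ) (v w : ℝ) : ℝ :=
  if 0 < w then w * φ (v / w) else 0

section realPhiF

variable {φ : ℝ → ℝ} {L : EReal} {v w : ℝ}

lemma phiF_eq_coe_realPhiF (hv : 0 ≤ v) (hvw : 0 < v → 0 < w) :
    phiF φ L v w = realPhiF φ v w := by
  by_cases hw : 0 < w
  · simp [phiF, realPhiF, hw]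
  · have hv0 : v = 0 := by by_contra h; exact hw (hvw (lt_of_le_of_ne hv (Ne.symm h)))
    simp [phiF, realPhiF, hw, hv0]

lemma continuousOn_realPhiF (hφ : ContinuousOn φ (Ici 0)) (w : ℝ) :
    ContinuousOn (fun v => realPhiF φ v w) (Ici 0) := by
  by_cases hw : 0 < w
  · simp only [realPhiF, if_pos hw]
    refine continuousOn_const.mul (hφ.comp (continuousOn_id.div_const w) ?_)
    exact fun v hv => div_nonneg hv hw.le
  · simpa only [realPhiF, if_neg hw] using continuousOn_const

lemma convexOn_realPhiF (hφ : ConvexOn ℝ (Ici 0) φ) (w : ℝ) :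
    ConvexOn ℝ (Ici 0) (fun v => realPhiF φ v w) := by
  by_cases hw : 0 < w
  · refine ⟨convex_Ici 0, fun x hx y hy a b ha hb hab => ?_⟩
    have h := hφ.2 (div_nonneg hx hw.le) (div_nonneg hy hw.le) ha hb hab
    simp only [realPhiF, if_pos hw, smul_eq_mul] at h ⊢
    calc w * φ ((a * x + b * y) / w) = w * φ (a * (x / w) + b * (y / w)) := by ring_nf
      _ ≤ w * (a * φ (x / w) + b * φ (y / w)) := by gcongr
      _ = a * (w * φ (x / w)) + b * (w * φ (y / w)) := by ring
  · simpa only [realPhiF, if_neg hw] using convexOn_const (0 : ℝ) (convex_Ici 0)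

lemma strictConvexOn_realPhiF (hφ : StrictConvexOn ℝ (Ici 0) φ) (hw : 0 < w) :
    StrictConvexOn ℝ (Ici 0) (fun v => realPhiF φ v w) := by
  refine ⟨convex_Ici 0, fun x hx y hy hxy a b ha hb hab => ?_⟩
  have hxy' : x / w ≠ y / w := fun h => hxy ((div_left_inj' hw.ne').mp h)
  have h := hφ.2 (div_nonneg hx hw.le) (div_nonneg hy hw.le) hxy' ha hb hab
  simp only [realPhiF, if_pos hw, smul_eq_mul] at h ⊢
  calc w * φ ((a * x + b * y) / w) = w * φ (a * (x / w) + b * (y / w)) := by ring_nf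
    _ < w * (a * φ (x / w) + b * φ (y / w)) := by gcongr
    _ = a * (w * φ (x / w)) + b * (w * φ (y / w)) := by ring

end realPhiF

section divergence

variable {m : ℕ} {φ : ℝ → ℝ} {L : EReal} {t : Fin m → ℝ} {M : Set (Fin m → ℝ)}

lemma Dphi_eq_coe_sum_realPhiF {s : Fin m → ℝ} (hs : ∀ i, 0 ≤ s i)
    (hst : ∀ i, 0 < s i → 0 < t i) :
    Dphi φ L s t = ((∑ i, realPhiF φ (s i) (t i) : ℝ) : EReal) := by
  push_cast
  exact Finset.sum_congr rfl fun i _ => phiF_eq_coe_realPhiF (hs i) (hst i)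

lemma continuousOn_sum_realPhiF (hφ : ContinuousOn φ (Ici 0)) :
    ContinuousOn (fun s : Fin m → ℝ => ∑ i, realPhiF φ (s i) (t i)) (univ.pi fun _ => Ici 0) :=
  continuousOn_finsetSum _ fun i _ =>
    (continuousOn_realPhiF hφ (t i)).comp (continuous_apply i).continuousOn
      fun _ hs => hs i (mem_univ i)

lemma strictConvexOn_sum_realPhiF (hφ : StrictConvexOn ℝ (Ici 0) φ) (hMconv : Convex ℝ M)
    (hMnonneg : ∀ s ∈ M, ∀ i, 0 ≤ s i) (hsupp : ∀ s ∈ M, ∀ i, 0 < s i → 0 < t i) :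
    StrictConvexOn ℝ M (fun s => ∑ i, realPhiF φ (s i) (t i)) := by
  refine ⟨hMconv, fun x hx y hy hxy a b ha hb hab => ?_⟩
  obtain ⟨j, hj⟩ := Function.ne_iff.mp hxy
  have htj : 0 < t j := by
    by_contra h
    have hx0 := (hMnonneg x hx j).eq_or_lt.resolve_right (mt (hsupp x hx j) h)
    have hy0 := (hMnonneg y hy j).eq_or_lt.resolve_right (mt (hsupp y hy j) h)
    exact hj (hx0.symm.trans hy0)
  simp only [smul_eq_mul, Finset.mul_sum, ← Finset.sum_add_distrib, Pi.add_apply, Pi.smul_apply]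
  refine Finset.sum_lt_sum (fun i _ => ?_) ⟨j, Finset.mem_univ j, ?_⟩
  · exact (convexOn_realPhiF hφ.convexOn (t i)).2 (hMnonneg x hx i) (hMnonneg y hy i) ha.le hb.le hab
  · exact (strictConvexOn_realPhiF hφ htj).2 (hMnonneg x hx j) (hMnonneg y hy j) hj ha hb hab

lemma isPhiProj_iff_isMinOn (hMnonneg : ∀ s ∈ M, ∀ i, 0 ≤ s i)
    (hsupp : ∀ s ∈ M, ∀ i, 0 < s i → 0 < t i) (p : Fin m → ℝ) :
    IsPhiProj φ L M t p ↔ p ∈ M ∧ IsMinOn (fun s => ∑ i, realPhiF φ (s i) (t i)) M p := by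
  have hD : ∀ s ∈ M, Dphi φ L s t = ((∑ i, realPhiF φ (s i) (t i) : ℝ) : EReal) :=
    fun s hs => Dphi_eq_coe_sum_realPhiF (hMnonneg s hs) (hsupp s hs)
  refine and_congr_right fun hp => ?_
  rw [isMinOn_iff, hD p hp]
  constructor
  · intro h s hs
    exact EReal.coe_le_coe_iff.mp (h ▸ hD s hs ▸ biInf_le _ hs)
  · intro h
    exact le_antisymm (le_iInf₂ fun s hs => hD s hs ▸ EReal.coe_le_coe_iff.mpr (h s hs))
      (hD p hp ▸ biInf_le _ hp)

end divergence

lemma IsCompact.existsUnique_isMinOn_of_strictConvexOn {E : Type*} [TopologicalSpace E]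
    [AddCommMonoid E] [Module ℝ E] {M : Set E} {g : E → ℝ} (hM : IsCompact M)
    (hne : M.Nonempty) (hcont : ContinuousOn g M) (hconv : StrictConvexOn ℝ M g) :
    ∃! p, p ∈ M ∧ IsMinOn g M p := by
  obtain ⟨p, hp, hmin⟩ := hM.exists_isMinOn hne hcont
  exact ⟨p, ⟨hp, hmin⟩, fun q ⟨hq, hqmin⟩ => hconv.eq_of_isMinOn hqmin hmin hq hp⟩

theorem statement4_general (m : ℕ) (φ : ℝ → ℝ) (L : EReal)
    (hφ0 : ContinuousWithinAt φ (Set.Ici 0) 0)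
    (hφsc : StrictConvexOn ℝ (Set.Ici (0 : ℝ)) φ)
    (t : Fin m → ℝ)
    (M : Set (Fin m → ℝ)) (hMne : M.Nonempty) (hMcl : IsClosed M)
    (hMconv : Convex ℝ M)
    (hMsub : ∀ s ∈ M, ∀ i, s i ∈ Set.Icc (0 : ℝ) 1)
    (hsupp : ∀ s ∈ M, ∀ i, 0 < s i → 0 < t i) :
    ∃! p, IsPhiProj φ L M t p := by
  have hMnonneg : ∀ s ∈ M, ∀ i, 0 ≤ s i := fun s hs i => (hMsub s hs i).1
  have hMcpt : IsCompact M :=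
    (isCompact_univ_pi fun _ => isCompact_Icc).of_isClosed_subset hMcl
      fun s hs i _ => hMsub s hs i
  have hcont := (continuousOn_sum_realPhiF (t := t) (hφsc.convexOn.continuousOn_Ici hφ0)).mono
    fun s hs i _ => mem_Ici.mpr (hMnonneg s hs i)
  rw [existsUnique_congr (isPhiProj_iff_isMinOn hMnonneg hsupp)]
  exact hMcpt.existsUnique_isMinOn_of_strictConvexOn hMne hcont
    (strictConvexOn_sum_realPhiF hφsc hMconv hMnonneg hsupp)

/-- if `φ` is strictly convex, `t ∈ [0,1]^m`, and `M ⊆ [0,1]^m` is a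
nonempty closed convex set with `supp(s) ⊆ supp(t)` for every `s ∈ M`, then the
`φ`-projection of `t` on `M` exists and is unique. -/
theorem statement4 (m : ℕ) (hm : 1 ≤ m) (φ : ℝ → ℝ) (L : EReal)
    (hφconv : ConvexOn ℝ (Set.Ici 0) φ)
    (hφ0 : ContinuousWithinAt φ (Set.Ici 0) 0)
    (hL : Tendsto (fun x : ℝ => ((φ x / x : ℝ) : EReal)) atTop (𝓝 L))
    (hφsc : StrictConvexOn ℝ (Set.Ici (0 : ℝ)) φ)
    (t : Fin m → ℝ) (ht : ∀ i, t i ∈ Set.Icc (0 : ℝ) 1)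
    (M : Set (Fin m → ℝ)) (hMne : M.Nonempty) (hMcl : IsClosed M)
    (hMconv : Convex ℝ M)
    (hMsub : ∀ s ∈ M, ∀ i, s i ∈ Set.Icc (0 : ℝ) 1)
    (hsupp : ∀ s ∈ M, ∀ i, 0 < s i → 0 < t i) :
    ∃! p, IsPhiProj φ L M t p :=
  statement4_general m φ L hφ0 hφsc t M hMne hMcl hMconv hMsub hsupp
end

section
/- Assume that for every w ∈ (0,∞) the restriction of φ to the interval [0,1/w] is strongly convex. Then for every t ∈ [0,1]^m with t ≠ 0, the function s ↦ D_φ(s∣t) is strongly convex on the convex set {s ∈ [0,1]^m : supp(s) ⊆ supp(t)} (on which it is real-valued). In particular, if t ∈ (0,1]^m, then D_φ(·∣t) is strongly convex on [0,1]^m with parameter min_{1≤i≤m} κ_φ(t_i)/t_i, where κ_φ(w) denotes a strong-convexity parameter of the restriction of φ to [0,1/w]. -/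
open Filter Topology

/-- The `φ`-divergence `D_φ(s∣t) = Σ_{i=1}^m f(s_i, t_i)` of `s` relative to `t`,
here on Euclidean space (so that strong convexity refers to the Euclidean norm). -/
noncomputable def DphiE (φ : ℝ → ℝ) (L : EReal) {m : ℕ}
    (s t : EuclideanSpace ℝ (Fin m)) : EReal :=
  ∑ i, phiF φ L (s i) (t i)

/-!
On `{s ∈ [0,1]^m : supp s ⊆ supp t}` every coordinate with `t_i = 0` is pinned to `0`, so
`D_φ(·∣t)` is the finite sum `∑_{t_i > 0} t_i φ(s_i / t_i)`. Rescaling the argument of `φ` by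
`1/t_i` maps `[0, 1/t_i]` onto `[0, 1]` and turns a strong-convexity parameter `κ` of `φ` into
`κ / t_i` for the perspective `v ↦ t_i φ(v / t_i)`. A sum of coordinatewise strongly convex
functions is strongly convex for the Euclidean norm with the smallest of their parameters.
-/

section StrongConvexOn

open scoped Pointwise

variable {E : Type*} [NormedAddCommGroup E] [NormedSpace ℝ E] {s : Set E} {κ : ℝ} {f g : E → ℝ}

lemma StrongConvexOn.congr (hf : StrongConvexOn s κ f) (hfg : Set.EqOn f g s) :
    StrongConvexOn s κ g := by
  refine ⟨hf.1, fun x hx y hy a b ha hb hab => ?_⟩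
  rw [← hfg hx, ← hfg hy, ← hfg (hf.1 hx hy ha hb hab)]
  exact hf.2 hx hy ha hb hab

lemma strongConvexOn_singleton (x : E) : StrongConvexOn {x} κ f := by
  refine ⟨convex_singleton x, ?_⟩
  rintro _ rfl _ rfl a b - - hab
  rw [Convex.combo_self hab, sub_self, norm_zero]
  simp [← add_mul, hab]

lemma StrongConvexOn.perspective (hf : StrongConvexOn s κ f) {w : ℝ} (hw : 0 < w) :
    StrongConvexOn (w • s) (κ / w) (fun x => w * f (w⁻¹ • x)) := by
  refine ⟨hf.1.smul w, ?_⟩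
  rintro _ ⟨x, hx, rfl⟩ _ ⟨y, hy, rfl⟩ a b ha hb hab
  have hcombo : w⁻¹ • (a • w • x + b • w • y) = a • x + b • y := by
    rw [smul_add, smul_comm a, smul_comm b, inv_smul_smul₀ hw.ne', inv_smul_smul₀ hw.ne']
  have hnorm : ‖w • x - w • y‖ ^ 2 = w ^ 2 * ‖x - y‖ ^ 2 := by
    rw [← smul_sub, norm_smul, Real.norm_of_nonneg hw.le, mul_pow]
  simp only [smul_eq_mul]
  rw [hcombo, inv_smul_smul₀ hw.ne', inv_smul_smul₀ hw.ne', hnorm]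
  calc w * f (a • x + b • y)
      ≤ w * (a * f x + b * f y - a * b * (κ / 2 * ‖x - y‖ ^ 2)) :=
        mul_le_mul_of_nonneg_left (hf.2 hx hy ha hb hab) hw.le
    _ = a * (w * f x) + b * (w * f y) - a * b * (κ / w / 2 * (w ^ 2 * ‖x - y‖ ^ 2)) := by
        field_simp

end StrongConvexOn

lemma strongConvexOn_euclideanSpace_sum {ι : Type*} [Fintype ι] {S : ι → Set ℝ} {c : ℝ}
    {g : ι → ℝ → ℝ} (hg : ∀ i, StrongConvexOn (S i) c (g i)) :
    StrongConvexOn {s : EuclideanSpace ℝ ι | ∀ i, s i ∈ S i} c (fun s => ∑ i, g i (s i)) := by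
  refine ⟨fun x hx y hy a b ha hb hab i => by simpa using (hg i).1 (hx i) (hy i) ha hb hab, ?_⟩
  intro x hx y hy a b ha hb hab
  calc ∑ i, g i ((a • x + b • y) i)
      ≤ ∑ i, (a * g i (x i) + b * g i (y i) - a * b * (c / 2 * ‖x i - y i‖ ^ 2)) :=
        Finset.sum_le_sum fun i _ => by simpa using (hg i).2 (hx i) (hy i) ha hb hab
    _ = a * ∑ i, g i (x i) + b * ∑ i, g i (y i) - a * b * (c / 2 * ‖x - y‖ ^ 2) := by
        simp only [EuclideanSpace.norm_sq_eq, PiLp.sub_apply, Finset.sum_sub_distrib,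
          Finset.sum_add_distrib, Finset.mul_sum]

section PhiDivergence

open scoped Pointwise

variable {φ : ℝ → ℝ} {L : EReal}

lemma coe_toReal_phiF {v w : ℝ} (hvw : 0 < v → 0 < w) :
    ((phiF φ L v w).toReal : EReal) = phiF φ L v w := by
  unfold phiF
  split_ifs with hw hv
  · rfl
  · exact absurd (hvw hv) hw
  · rfl

lemma toReal_DphiE {m : ℕ} {s t : EuclideanSpace ℝ (Fin m)} (hst : ∀ i, 0 < s i → 0 < t i) :
    (DphiE φ L s t).toReal = ∑ i, (phiF φ L (s i) (t i)).toReal := by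
  have hcoe : DphiE φ L s t = ((∑ i, (phiF φ L (s i) (t i)).toReal : ℝ) : EReal) := by
    rw [DphiE, ← Finset.sum_congr rfl fun i _ => coe_toReal_phiF (hst i)]
    exact (map_sum (⟨⟨Real.toEReal, EReal.coe_zero⟩, EReal.coe_add⟩ : ℝ →+ EReal) _ _).symm
  rw [hcoe, EReal.toReal_coe]

lemma strongConvexOn_toReal_phiF {w c : ℝ}
    (hφ : 0 < w → StrongConvexOn (Set.Icc 0 w⁻¹) (c * w) φ) :
    StrongConvexOn {v | v ∈ Set.Icc (0 : ℝ) 1 ∧ (0 < v → 0 < w)} c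
      (fun v => (phiF φ L v w).toReal) := by
  by_cases hw : 0 < w
  · have hset : {v | v ∈ Set.Icc (0 : ℝ) 1 ∧ (0 < v → 0 < w)} = w • Set.Icc 0 w⁻¹ := by
      rw [LinearOrderedField.smul_Icc hw, mul_zero, mul_inv_cancel₀ hw.ne']
      ext v
      simp [hw]
    have hpersp := (hφ hw).perspective hw
    rw [mul_div_cancel_right₀ c hw.ne'] at hpersp
    rw [hset]
    refine hpersp.congr fun v _ => ?_
    simp only [phiF, if_pos hw, EReal.toReal_coe, smul_eq_mul, div_eq_inv_mul]
  · have hset : {v | v ∈ Set.Icc (0 : ℝ) 1 ∧ (0 < v → 0 < w)} = {0} := by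
      ext v
      simp only [Set.mem_ofPred_eq, Set.mem_Icc, hw, imp_false, not_lt, Set.mem_singleton_iff]
      grind
    rw [hset]
    exact strongConvexOn_singleton 0

theorem strongConvexOn_toReal_DphiE {m : ℕ} {t : EuclideanSpace ℝ (Fin m)} {c : ℝ}
    (hφ : ∀ i, 0 < t i → StrongConvexOn (Set.Icc 0 (t i)⁻¹) (c * t i) φ) :
    StrongConvexOn {s : EuclideanSpace ℝ (Fin m) | (∀ i, s i ∈ Set.Icc (0 : ℝ) 1) ∧
      ∀ i, 0 < s i → 0 < t i} c (fun s => (DphiE φ L s t).toReal) := by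
  have hset : {s : EuclideanSpace ℝ (Fin m) | (∀ i, s i ∈ Set.Icc (0 : ℝ) 1) ∧
      ∀ i, 0 < s i → 0 < t i} =
      {s | ∀ i, s i ∈ {v | v ∈ Set.Icc (0 : ℝ) 1 ∧ (0 < v → 0 < t i)}} := by
    ext s
    simp only [Set.mem_ofPred_eq, forall_and]
  rw [hset]
  exact (strongConvexOn_euclideanSpace_sum fun i => strongConvexOn_toReal_phiF (hφ i)).congr
    fun s hs => (toReal_DphiE fun i => (hs i).2).symm

end PhiDivergence

theorem statement6_general (m : ℕ) (hm : 1 ≤ m) (φ : ℝ → ℝ) (L : EReal)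
    (κ : ℝ → ℝ)
    (hκ : ∀ w : ℝ, 0 < w → 0 < κ w ∧ StrongConvexOn (Set.Icc (0 : ℝ) (1 / w)) (κ w) φ) :
    (∀ t : EuclideanSpace ℝ (Fin m), (∀ i, t i ∈ Set.Icc (0 : ℝ) 1) → t ≠ 0 →
      ∃ c > 0, StrongConvexOn
        {s : EuclideanSpace ℝ (Fin m) | (∀ i, s i ∈ Set.Icc (0 : ℝ) 1) ∧
          ∀ i, 0 < s i → 0 < t i} c
        (fun s => (DphiE φ L s t).toReal)) ∧
    (∀ t : EuclideanSpace ℝ (Fin m), (∀ i, t i ∈ Set.Ioc (0 : ℝ) 1) →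
      StrongConvexOn {s : EuclideanSpace ℝ (Fin m) | ∀ i, s i ∈ Set.Icc (0 : ℝ) 1}
        (Finset.univ.inf' (Finset.univ_nonempty_iff.mpr ⟨⟨0, hm⟩⟩)
          (fun i : Fin m => κ (t i) / t i))
        (fun s => (DphiE φ L s t).toReal)) := by
  have hφ : ∀ {c w : ℝ}, 0 < w → c ≤ κ w / w → StrongConvexOn (Set.Icc 0 w⁻¹) (c * w) φ :=
    fun hw hc => by
      simpa using (hκ _ hw).2.mono ((le_div_iff₀ hw).mp hc)
  constructor
  · intro t ht ht0
    obtain ⟨i₀, hi₀⟩ : ∃ i, 0 < t i := by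
      by_contra! h
      exact ht0 (PiLp.ext fun i => le_antisymm (h i) (ht i).1)
    set supp := Finset.univ.filter fun i => 0 < t i
    have hsupp : supp.Nonempty := ⟨i₀, by simpa [supp] using hi₀⟩
    refine ⟨supp.inf' hsupp fun i => κ (t i) / t i, ?_, strongConvexOn_toReal_DphiE
      fun i hi => hφ hi (Finset.inf'_le _ (by simpa [supp] using hi))⟩
    refine (Finset.lt_inf'_iff _).mpr fun i hi => ?_
    have hi : 0 < t i := by simpa [supp] using hi
    exact div_pos (hκ _ hi).1 hi
  · intro t ht
    have hset : {s : EuclideanSpace ℝ (Fin m) | ∀ i, s i ∈ Set.Icc (0 : ℝ) 1} =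
        {s | (∀ i, s i ∈ Set.Icc (0 : ℝ) 1) ∧ ∀ i, 0 < s i → 0 < t i} := by
      ext s
      simp [fun i => (ht i).1]
    rw [hset]
    exact strongConvexOn_toReal_DphiE fun i hi => hφ hi (Finset.inf'_le _ (Finset.mem_univ i))

/-- if for every `w > 0` the restriction of `φ` to `[0, 1/w]` is
strongly convex (with parameter `κ_φ(w) > 0`), then for every `t ∈ [0,1]^m`, `t ≠ 0`,
`D_φ(·∣t)` is strongly convex on `{s ∈ [0,1]^m : supp(s) ⊆ supp(t)}`; and in
particular, for `t ∈ (0,1]^m`, `D_φ(·∣t)` is strongly convex on `[0,1]^m` with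
parameter `min_{1 ≤ i ≤ m} κ_φ(t_i)/t_i`. -/
theorem statement6 (m : ℕ) (hm : 1 ≤ m) (φ : ℝ → ℝ) (L : EReal)
    (hφconv : ConvexOn ℝ (Set.Ici 0) φ)
    (hφ0 : ContinuousWithinAt φ (Set.Ici 0) 0)
    (hL : Tendsto (fun x : ℝ => ((φ x / x : ℝ) : EReal)) atTop (𝓝 L))
    (κ : ℝ → ℝ)
    (hκ : ∀ w : ℝ, 0 < w → 0 < κ w ∧ StrongConvexOn (Set.Icc (0 : ℝ) (1 / w)) (κ w) φ) :
    (∀ t : EuclideanSpace ℝ (Fin m), (∀ i, t i ∈ Set.Icc (0 : ℝ) 1) → t ≠ 0 →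
      ∃ c > 0, StrongConvexOn
        {s : EuclideanSpace ℝ (Fin m) | (∀ i, s i ∈ Set.Icc (0 : ℝ) 1) ∧
          ∀ i, 0 < s i → 0 < t i} c
        (fun s => (DphiE φ L s t).toReal)) ∧
    (∀ t : EuclideanSpace ℝ (Fin m), (∀ i, t i ∈ Set.Ioc (0 : ℝ) 1) →
      StrongConvexOn {s : EuclideanSpace ℝ (Fin m) | ∀ i, s i ∈ Set.Icc (0 : ℝ) 1}
        (Finset.univ.inf' (Finset.univ_nonempty_iff.mpr ⟨⟨0, hm⟩⟩)
          (fun i : Fin m => κ (t i) / t i))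
        (fun s => (DphiE φ L s t).toReal)) :=
  statement6_general m hm φ L κ hκ
end

section
/- Let t0 ∈ (0,1)^m. Assume: (i) there is an open neighborhood N(t0) ⊆ (0,1)^m of t0 such that for every t ∈ N(t0) the φ-projection of t on M = S(cl(Θ)) exists, is unique, and equals S(θ) for a (necessarily unique) θ ∈ int(Θ), so that ϑ* maps N(t0) into int(Θ); and (ii) the k×k Hessian matrix H0 of the function θ ↦ D_φ(S(θ)∣t0) evaluated at ϑ*(t0) is positive definite. Then ϑ* is continuously differentiable on an open neighborhood of t0, and its k×m Jacobian matrix at t0 is J[ϑ*](t0) = H0⁻¹ · J[S](ϑ*(t0))ᵀ · Δ(t0), where Δ(t0) is the m×m diagonal matrix whose i-th diagonal entry is (S_i(ϑ*(t0))/t_{0,i}²)·φ''(S_i(ϑ*(t0))/t_{0,i}). -/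
/-!
Write `G(t, θ) = J[S](θ)ᵀ φ'(S(θ)/t)` for the `θ`-gradient of `θ ↦ D_φ(S(θ)∣t)`. Since the
projection lies in `int Θ`, `G(t, ϑ*(t)) = 0` for `t` near `t₀`. The map `G` is `C¹` jointly in
`(t, θ)`; its `θ`-Jacobian at `(t₀, ϑ*(t₀))` is the Hessian `H₀` and its `t`-Jacobian is
`-J[S]ᵀ Δ(t₀)`. Compactness of `cl Θ` and uniqueness of the projection make `ϑ*` continuous
at `t₀`, so by the implicit function theorem `ϑ*` agrees near `t₀` with the `C¹` solution of
`G = 0`. Differentiating `G(t, ϑ*(t)) = 0` at `t₀` gives `H₀ J[ϑ*](t₀) = J[S]ᵀ Δ(t₀)`.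
-/

open Filter Topology Matrix

/-- For `t ∈ (0,1)^m` and `s ∈ [0,1]^m`, the (real-valued) `φ`-divergence
`D_φ(s∣t) = Σ_{i=1}^m t_i φ(s_i/t_i)`. -/
noncomputable def DphiR (φ : ℝ → ℝ) {m : ℕ} (s t : Fin m → ℝ) : ℝ :=
  ∑ i, t i * φ (s i / t i)

/-- `p` is a `φ`-projection of `t` on `M`: `p ∈ M` minimizes `D_φ(·∣t)` over `M`. -/
def IsPhiProjR (φ : ℝ → ℝ) {m : ℕ} (M : Set (Fin m → ℝ)) (t p : Fin m → ℝ) : Prop :=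
  p ∈ M ∧ ∀ s ∈ M, DphiR φ p t ≤ DphiR φ s t

/-- The Jacobian matrix of `F : ℝ^a → ℝ^b` at `x`. -/
noncomputable def jacMatrix {a b : ℕ} (F : (Fin a → ℝ) → (Fin b → ℝ))
    (x : Fin a → ℝ) : Matrix (Fin b) (Fin a) ℝ :=
  Matrix.of fun i j => fderiv ℝ (fun y => F y i) x (Pi.single j 1)

/-- The Hessian matrix of `h : ℝ^a → ℝ` at `x`. -/
noncomputable def hessMatrix {a : ℕ} (h : (Fin a → ℝ) → ℝ)
    (x : Fin a → ℝ) : Matrix (Fin a) (Fin a) ℝ :=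
  Matrix.of fun i j =>
    fderiv ℝ (fun y => fderiv ℝ h y (Pi.single j 1)) x (Pi.single i 1)

open Set

section JacobianMatrix

variable {a b c : ℕ}

theorem HasFDerivAt.jacMatrix_eq {F : (Fin a → ℝ) → Fin b → ℝ} {F' : (Fin a → ℝ) →L[ℝ] Fin b → ℝ}
    {x : Fin a → ℝ} (h : HasFDerivAt F F' x) :
    jacMatrix F x = LinearMap.toMatrix' (F' : (Fin a → ℝ) →ₗ[ℝ] Fin b → ℝ) := by
  ext i j
  have hi : HasFDerivAt (fun y => F y i) _ x := (hasFDerivAt_apply (𝕜 := ℝ) i (F x)).comp x h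
  rw [jacMatrix, of_apply, hi.fderiv]
  rfl

theorem jacMatrix_prodMk_left {f : (Fin a → ℝ) × (Fin b → ℝ) → Fin c → ℝ} {x : Fin a → ℝ}
    {y : Fin b → ℝ} (hf : DifferentiableAt ℝ f (x, y)) :
    jacMatrix (fun x' => f (x', y)) x =
      LinearMap.toMatrix' (fderiv ℝ f (x, y) ∘L .inl ℝ _ _ : (Fin a → ℝ) →ₗ[ℝ] Fin c → ℝ) :=
  (hf.hasFDerivAt.comp x (hasFDerivAt_prodMk_left x y)).jacMatrix_eq

theorem jacMatrix_prodMk_right {f : (Fin a → ℝ) × (Fin b → ℝ) → Fin c → ℝ} {x : Fin a → ℝ}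
    {y : Fin b → ℝ} (hf : DifferentiableAt ℝ f (x, y)) :
    jacMatrix (fun y' => f (x, y')) y =
      LinearMap.toMatrix' (fderiv ℝ f (x, y) ∘L .inr ℝ _ _ : (Fin b → ℝ) →ₗ[ℝ] Fin c → ℝ) :=
  (hf.hasFDerivAt.comp y (hasFDerivAt_prodMk_right x y)).jacMatrix_eq

theorem jacMatrix_mulVec (A : Matrix (Fin c) (Fin b) ℝ) {F : (Fin a → ℝ) → Fin b → ℝ}
    {x : Fin a → ℝ} (hF : DifferentiableAt ℝ F x) :
    jacMatrix (fun y => A *ᵥ F y) x = A * jacMatrix F x := by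
  have h : HasFDerivAt (fun y => A *ᵥ F y) _ x :=
    A.mulVecLin.toContinuousLinearMap.hasFDerivAt.comp x hF.hasFDerivAt
  rw [h.jacMatrix_eq, hF.hasFDerivAt.jacMatrix_eq, ContinuousLinearMap.toLinearMap_comp,
    LinearMap.toMatrix'_comp]
  exact congrArg (· * _) (LinearMap.toMatrix'_toLin' A)

theorem jacMatrix_pi_map {f : Fin a → ℝ → ℝ} {f' x : Fin a → ℝ}
    (hf : ∀ i, HasDerivAt (f i) (f' i) (x i)) :
    jacMatrix (fun y i => f i (y i)) x = diagonal f' := by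
  ext i j
  have h : HasFDerivAt (fun y => f i (y i)) _ x :=
    (hf i).comp_hasFDerivAt x (hasFDerivAt_apply (𝕜 := ℝ) i x)
  rw [jacMatrix, of_apply, h.fderiv]
  simp [diagonal_apply, Pi.single_apply]

theorem jacMatrix_partial_add_mul_jacMatrix_eq_zero
    {f : (Fin a → ℝ) × (Fin b → ℝ) → Fin c → ℝ} {g : (Fin a → ℝ) → Fin b → ℝ} {x : Fin a → ℝ}
    (hf : DifferentiableAt ℝ f (x, g x)) (hg : DifferentiableAt ℝ g x)
    (hfg : ∀ᶠ y in 𝓝 x, f (y, g y) = 0) :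
    jacMatrix (fun y => f (y, g x)) x + jacMatrix (fun z => f (x, z)) (g x) * jacMatrix g x = 0 := by
  set D := fderiv ℝ f (x, g x)
  have hcurve : HasFDerivAt (fun y => f (y, g y)) _ x :=
    hf.hasFDerivAt.comp x ((hasFDerivAt_id x).prodMk hg.hasFDerivAt)
  have hzero : D.comp ((ContinuousLinearMap.id ℝ _).prod (fderiv ℝ g x)) = 0 := by
    rw [← hcurve.fderiv,
      (show (fun y => f (y, g y)) =ᶠ[𝓝 x] fun _ => 0 from hfg).fderiv_eq]
    exact fderiv_const_apply 0
  have hsplit : D.comp (.inl ℝ _ _) + (D.comp (.inr ℝ _ _)).comp (fderiv ℝ g x) = 0 := by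
    rw [← hzero]
    ext v : 1
    simp [← map_add]
  rw [jacMatrix_prodMk_left hf, jacMatrix_prodMk_right hf, hg.hasFDerivAt.jacMatrix_eq,
    ← LinearMap.toMatrix'_comp, ← map_add]
  simpa using congrArg (fun L : (Fin a → ℝ) →L[ℝ] Fin c → ℝ =>
    LinearMap.toMatrix' (L : (Fin a → ℝ) →ₗ[ℝ] Fin c → ℝ)) hsplit

theorem hessMatrix_eq_transpose_jacMatrix {h : (Fin a → ℝ) → ℝ} {g : (Fin a → ℝ) → Fin a → ℝ}
    {x : Fin a → ℝ} (hg : ∀ᶠ y in 𝓝 x, ∀ j, fderiv ℝ h y (Pi.single j 1) = g y j) :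
    hessMatrix h x = (jacMatrix g x)ᵀ := by
  ext i j
  have hgj : (fun y => fderiv ℝ h y (Pi.single j 1)) =ᶠ[𝓝 x] fun y => g y j :=
    hg.mono fun y hy => hy j
  simp only [hessMatrix, jacMatrix, transpose_apply, of_apply, hgj.fderiv_eq]

theorem ContinuousLinearMap.isInvertible_of_det_toMatrix'_ne_zero
    (L : (Fin a → ℝ) →L[ℝ] Fin a → ℝ)
    (hL : (LinearMap.toMatrix' (L : (Fin a → ℝ) →ₗ[ℝ] Fin a → ℝ)).det ≠ 0) : L.IsInvertible := by
  rw [LinearMap.det_toMatrix'] at hL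
  exact ⟨L.toContinuousLinearEquivOfDetNeZero hL, L.coe_toContinuousLinearEquivOfDetNeZero hL⟩

end JacobianMatrix

theorem ContDiffAt.eventuallyEq_implicitFunction {E₁ E₂ F : Type*}
    [NormedAddCommGroup E₁] [NormedSpace ℝ E₁] [CompleteSpace E₁]
    [NormedAddCommGroup E₂] [NormedSpace ℝ E₂] [CompleteSpace E₂]
    [NormedAddCommGroup F] [NormedSpace ℝ F] [CompleteSpace F]
    {f : E₁ × E₂ → F} {u : E₁ × E₂} {n : WithTop ℕ∞} (cdf : ContDiffAt ℝ n f u) (pn : n ≠ 0)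
    (if₂ : (fderiv ℝ f u ∘L .inr ℝ E₁ E₂).IsInvertible) {g : E₁ → E₂}
    (hg : Tendsto g (𝓝 u.1) (𝓝 u.2)) (hfg : ∀ᶠ x in 𝓝 u.1, f (x, g x) = f u) :
    g =ᶠ[𝓝 u.1] cdf.implicitFunction pn if₂ := by
  have hcurve : Tendsto (fun x => (x, g x)) (𝓝 u.1) (𝓝 u) := tendsto_id.prodMk_nhds hg
  filter_upwards [hcurve.eventually (cdf.eventually_apply_eq_iff_implicitFunction pn if₂), hfg]
    with x hiff hx
  exact (hiff.mp hx).symm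

theorem eventually_contDiffAt_of_implicit {a b n : ℕ} (hn : n ≠ 0)
    {f : (Fin a → ℝ) × (Fin b → ℝ) → Fin b → ℝ} {g : (Fin a → ℝ) → Fin b → ℝ} {x : Fin a → ℝ}
    (hf : ContDiffAt ℝ n f (x, g x)) (hdet : (jacMatrix (fun z => f (x, z)) (g x)).det ≠ 0)
    (hg : Tendsto g (𝓝 x) (𝓝 (g x))) (hfg : ∀ᶠ y in 𝓝 x, f (y, g y) = f (x, g x)) :
    ∀ᶠ y in 𝓝 x, ContDiffAt ℝ n g y := by
  have pn : (n : WithTop ℕ∞) ≠ 0 := by exact_mod_cast hn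
  have if₂ := (fderiv ℝ f (x, g x) ∘L .inr ℝ _ _).isInvertible_of_det_toMatrix'_ne_zero
    (by rwa [← jacMatrix_prodMk_right (hf.differentiableAt pn)])
  have hψ := (hf.contDiffAt_implicitFunction pn if₂).eventually (by simp)
  filter_upwards [(hf.eventuallyEq_implicitFunction pn if₂ hg hfg).eventuallyEq_nhds, hψ]
    with y hy hψy
  exact hψy.congr_of_eventuallyEq hy

theorem IsCompact.tendsto_of_isMinOn {α β : Type*} [TopologicalSpace α] [TopologicalSpace β]
    {K : Set β} (hK : IsCompact K) {A : Set α} {F : α → β → ℝ}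
    (hF : ContinuousOn (Function.uncurry F) (A ×ˢ K)) {ϑ : α → β} {x₀ : α} (hA : A ∈ 𝓝 x₀)
    (hϑ : ∀ᶠ x in 𝓝 x₀, ϑ x ∈ K ∧ IsMinOn (F x) K (ϑ x))
    (huniq : ∀ θ ∈ K, IsMinOn (F x₀) K θ → θ = ϑ x₀) :
    Tendsto ϑ (𝓝 x₀) (𝓝 (ϑ x₀)) := by
  refine hK.tendsto_nhds_of_unique_mapClusterPt (hϑ.mono fun x hx => hx.1)
    fun θ hθ hclust => huniq θ hθ (isMinOn_iff.mpr fun θ' hθ' => ?_)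
  obtain ⟨U, hU, hUθ⟩ := mapClusterPt_iff_ultrafilter.mp hclust
  have hUA : ∀ᶠ x in (U : Filter α), x ∈ A ∧ ϑ x ∈ K ∧ IsMinOn (F x) K (ϑ x) :=
    hU (inter_mem hA hϑ)
  have hlim : ∀ {y : α → β} {θ₀ : β}, θ₀ ∈ K → (∀ᶠ x in (U : Filter α), y x ∈ K) →
      Tendsto y U (𝓝 θ₀) → Tendsto (fun x => F x (y x)) U (𝓝 (F x₀ θ₀)) :=
    fun hθ₀ hyK hy => (hF _ ⟨mem_of_mem_nhds hA, hθ₀⟩).tendsto.comp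
      (tendsto_nhdsWithin_iff.mpr ⟨(tendsto_id.mono_left hU).prodMk_nhds hy,
        (hUA.and hyK).mono fun x hx => ⟨hx.1.1, hx.2⟩⟩)
  exact le_of_tendsto_of_tendsto (hlim hθ (hUA.mono fun x hx => hx.2.1) hUθ)
    (hlim hθ' (Eventually.of_forall fun _ => hθ') tendsto_const_nhds)
    (hUA.mono fun x hx => isMinOn_iff.mp hx.2.2 θ' hθ')

theorem continuousOn_Ici_of_continuousOn_Ioi {β : Type*} [TopologicalSpace β] {f : ℝ → β}
    {a : ℝ} (ha : ContinuousWithinAt f (Ici a) a) (hf : ContinuousOn f (Ioi a)) :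
    ContinuousOn f (Ici a) := by
  intro x hx
  rcases (mem_Ici.mp hx).eq_or_lt with rfl | hax
  · exact ha
  · exact (hf.continuousAt (Ioi_mem_nhds hax)).continuousWithinAt

section Divergence

variable {m k : ℕ} {φ : ℝ → ℝ}

theorem continuousOn_DphiR (hφ : ContinuousOn φ (Ici 0)) :
    ContinuousOn (fun q : (Fin m → ℝ) × (Fin m → ℝ) => DphiR φ q.1 q.2)
      {q | ∀ i, 0 ≤ q.1 i ∧ 0 < q.2 i} := by
  refine continuousOn_finsetSum _ fun i _ => ?_
  have hs : Continuous fun q : (Fin m → ℝ) × (Fin m → ℝ) => q.1 i := by fun_prop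
  have ht : Continuous fun q : (Fin m → ℝ) × (Fin m → ℝ) => q.2 i := by fun_prop
  exact ht.continuousOn.mul (hφ.comp (hs.continuousOn.div ht.continuousOn
    fun q hq => (hq i).2.ne') fun q hq => div_nonneg (hq i).1 (hq i).2.le)

theorem isPhiProjR_image_iff {α : Type*} {S : α → Fin m → ℝ} {K : Set α} {t : Fin m → ℝ}
    {θ : α} (hθ : θ ∈ K) :
    IsPhiProjR φ (S '' K) t (S θ) ↔ IsMinOn (fun θ' => DphiR φ (S θ') t) K θ := by
  simp [IsPhiProjR, isMinOn_iff, mem_image_of_mem S hθ]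

theorem tendsto_of_isPhiProjR {α : Type*} [TopologicalSpace α] (hφ : ContinuousOn φ (Ici 0))
    {K : Set α} (hK : IsCompact K) {S : α → Fin m → ℝ} (hS : ContinuousOn S K)
    (hSinj : InjOn S K) (hSnonneg : ∀ θ ∈ K, ∀ i, 0 ≤ S θ i) {N : Set (Fin m → ℝ)}
    {t₀ : Fin m → ℝ} (hN : N ∈ 𝓝 t₀) (hNpos : ∀ t ∈ N, ∀ i, 0 < t i)
    {ϑ : (Fin m → ℝ) → α} (hϑK : ∀ t ∈ N, ϑ t ∈ K)
    (hϑ : ∀ t ∈ N, ∀ s, IsPhiProjR φ (S '' K) t s ↔ s = S (ϑ t)) :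
    Tendsto ϑ (𝓝 t₀) (𝓝 (ϑ t₀)) := by
  have hF : ContinuousOn (Function.uncurry fun t θ => DphiR φ (S θ) t) (N ×ˢ K) :=
    (continuousOn_DphiR hφ).comp ((hS.comp continuousOn_snd fun p hp => hp.2).prodMk
      continuousOn_fst) fun p hp i => ⟨hSnonneg _ hp.2 i, hNpos _ hp.1 i⟩
  have hmin : ∀ t ∈ N, ϑ t ∈ K ∧ IsMinOn (fun θ => DphiR φ (S θ) t) K (ϑ t) := fun t ht =>
    ⟨hϑK t ht, (isPhiProjR_image_iff (hϑK t ht)).mp ((hϑ t ht _).mpr rfl)⟩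
  have ht₀ : t₀ ∈ N := mem_of_mem_nhds hN
  refine hK.tendsto_of_isMinOn hF hN (eventually_of_mem hN hmin) fun θ hθ hθmin =>
    hSinj hθ (hϑK t₀ ht₀) ?_
  exact (hϑ t₀ ht₀ _).mp ((isPhiProjR_image_iff hθ).mpr hθmin)

theorem hasFDerivAt_DphiR_comp {E : Type*} [NormedAddCommGroup E] [NormedSpace ℝ E]
    {S : E → Fin m → ℝ} {t : Fin m → ℝ} {θ : E} (hS : DifferentiableAt ℝ S θ)
    (ht : ∀ i, t i ≠ 0) (hφ : ∀ i, DifferentiableAt ℝ φ (S θ i / t i)) :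
    HasFDerivAt (fun θ => DphiR φ (S θ) t)
      (∑ i, deriv φ (S θ i / t i) • fderiv ℝ (fun θ => S θ i) θ) θ := by
  refine HasFDerivAt.fun_sum fun i _ => ?_
  have hSi : HasFDerivAt (fun θ => S θ i) (fderiv ℝ (fun θ => S θ i) θ) θ :=
    (differentiableAt_pi.mp hS i).hasFDerivAt
  have hratio : HasFDerivAt (fun θ => S θ i / t i) ((t i)⁻¹ • fderiv ℝ (fun θ => S θ i) θ) θ := by
    simpa only [div_eq_inv_mul] using hSi.const_mul (t i)⁻¹
  refine (((hφ i).hasDerivAt.comp_hasFDerivAt θ hratio).const_mul (t i)).congr_fderiv ?_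
  rw [smul_smul, smul_smul, mul_right_comm, mul_inv_cancel₀ (ht i), one_mul]

/-- The `θ`-gradient `J[S](θ)ᵀ φ'(S(θ)/t)` of `θ ↦ D_φ(S(θ)∣t)`, at `p = (t, θ)`. -/
noncomputable def divergenceGradient (φ : ℝ → ℝ) (S : (Fin k → ℝ) → Fin m → ℝ)
    (p : (Fin m → ℝ) × (Fin k → ℝ)) : Fin k → ℝ :=
  (jacMatrix S p.2)ᵀ *ᵥ fun i => deriv φ (S p.2 i / p.1 i)

variable {S : (Fin k → ℝ) → Fin m → ℝ} {V : Set (Fin k → ℝ)}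

theorem fderiv_DphiR_comp_single (hφ : DifferentiableOn ℝ φ (Ioi 0)) (hV : IsOpen V)
    (hS : DifferentiableOn ℝ S V) (hSpos : ∀ θ ∈ V, ∀ i, 0 < S θ i) {t : Fin m → ℝ}
    (ht : ∀ i, 0 < t i) {θ : Fin k → ℝ} (hθ : θ ∈ V) (j : Fin k) :
    fderiv ℝ (fun θ => DphiR φ (S θ) t) θ (Pi.single j 1) = divergenceGradient φ S (t, θ) j := by
  have hφθ : ∀ i, DifferentiableAt ℝ φ (S θ i / t i) := fun i =>
    hφ.differentiableAt (Ioi_mem_nhds (div_pos (hSpos θ hθ i) (ht i)))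
  rw [(hasFDerivAt_DphiR_comp (hS.differentiableAt (hV.mem_nhds hθ)) (fun i => (ht i).ne')
    hφθ).fderiv]
  simp [divergenceGradient, mulVec, dotProduct, jacMatrix, mul_comm]

theorem divergenceGradient_eq_zero_of_isPhiProjR (hφ : DifferentiableOn ℝ φ (Ioi 0))
    (hV : IsOpen V) (hS : DifferentiableOn ℝ S V) (hSpos : ∀ θ ∈ V, ∀ i, 0 < S θ i)
    {K : Set (Fin k → ℝ)} (hVK : V ⊆ K) {t : Fin m → ℝ} (ht : ∀ i, 0 < t i) {θ : Fin k → ℝ}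
    (hθ : θ ∈ V) (hproj : IsPhiProjR φ (S '' K) t (S θ)) : divergenceGradient φ S (t, θ) = 0 := by
  have hmin : IsLocalMin (fun θ => DphiR φ (S θ) t) θ :=
    ((isPhiProjR_image_iff (hVK hθ)).mp hproj).isLocalMin
      (mem_of_superset (hV.mem_nhds hθ) hVK)
  funext j
  rw [← fderiv_DphiR_comp_single hφ hV hS hSpos ht hθ, hmin.fderiv_eq_zero]
  rfl

theorem hessMatrix_DphiR_comp (hφ : DifferentiableOn ℝ φ (Ioi 0)) (hV : IsOpen V)
    (hS : DifferentiableOn ℝ S V) (hSpos : ∀ θ ∈ V, ∀ i, 0 < S θ i) {t : Fin m → ℝ}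
    (ht : ∀ i, 0 < t i) {θ : Fin k → ℝ} (hθ : θ ∈ V) :
    hessMatrix (fun θ => DphiR φ (S θ) t) θ =
      (jacMatrix (fun θ => divergenceGradient φ S (t, θ)) θ)ᵀ :=
  hessMatrix_eq_transpose_jacMatrix (eventually_of_mem (hV.mem_nhds hθ)
    fun _ hθ' => fderiv_DphiR_comp_single hφ hV hS hSpos ht hθ')

theorem contDiffOn_divergenceGradient (hφ : ContDiffOn ℝ 2 φ (Ioi 0)) (hV : IsOpen V)
    (hS : ContDiffOn ℝ 2 S V) (hSpos : ∀ θ ∈ V, ∀ i, 0 < S θ i) :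
    ContDiffOn ℝ 1 (divergenceGradient φ S) ({t | ∀ i, 0 < t i} ×ˢ V) := by
  have hφ' : ContDiffOn ℝ 1 (deriv φ) (Ioi 0) := hφ.deriv_of_isOpen isOpen_Ioi (by norm_num)
  have hsnd : MapsTo Prod.snd ({t : Fin m → ℝ | ∀ i, 0 < t i} ×ˢ V) V := fun p hp => hp.2
  refine contDiffOn_pi.mpr fun j => ?_
  simp only [divergenceGradient, mulVec, dotProduct, transpose_apply]
  refine ContDiffOn.sum fun i _ => ContDiffOn.mul ?_ ?_
  · have hSi : ContDiffOn ℝ 2 (fun θ => S θ i) V := contDiffOn_pi.mp hS i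
    exact ((hSi.fderiv_of_isOpen hV (by norm_num)).clm_apply contDiffOn_const).comp
      contDiff_snd.contDiffOn hsnd
  · have hSi : ContDiffOn ℝ 1 (fun p : (Fin m → ℝ) × (Fin k → ℝ) => S p.2 i) _ :=
      ((contDiffOn_pi.mp hS i).of_le (by norm_num)).comp contDiff_snd.contDiffOn hsnd
    have hti : ContDiff ℝ 1 fun p : (Fin m → ℝ) × (Fin k → ℝ) => p.1 i := by fun_prop
    exact hφ'.comp (hSi.div hti.contDiffOn fun p hp => (hp.1 i).ne')
      fun p hp => div_pos (hSpos _ hp.2 i) (hp.1 i)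

theorem jacMatrix_divergenceGradient_fst (hφ' : DifferentiableOn ℝ (deriv φ) (Ioi 0))
    {θ : Fin k → ℝ} (hS : ∀ i, 0 < S θ i) {t : Fin m → ℝ} (ht : ∀ i, 0 < t i) :
    jacMatrix (fun t => divergenceGradient φ S (t, θ)) t =
      -((jacMatrix S θ)ᵀ * diagonal fun i => S θ i / t i ^ 2 * deriv (deriv φ) (S θ i / t i)) := by
  have hderiv : ∀ i, HasDerivAt (fun u => deriv φ (S θ i / u))
      (deriv (deriv φ) (S θ i / t i) * (-S θ i / t i ^ 2)) (t i) := fun i => by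
    have hquot : HasDerivAt (fun u => S θ i / u) (-S θ i / t i ^ 2) (t i) := by
      simpa [div_eq_mul_inv, neg_div] using (hasDerivAt_inv (ht i).ne').const_mul (S θ i)
    exact (hφ'.differentiableAt (Ioi_mem_nhds (div_pos (hS i) (ht i)))).hasDerivAt.comp (t i)
      hquot
  have hF : DifferentiableAt ℝ (fun t i => deriv φ (S θ i / t i)) t :=
    differentiableAt_pi.mpr fun i =>
      DifferentiableAt.comp (g := fun u => deriv φ (S θ i / u)) t (hderiv i).differentiableAt
        (differentiableAt_apply i t)
  simp only [divergenceGradient]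
  rw [jacMatrix_mulVec _ hF, jacMatrix_pi_map (f := fun i u => deriv φ (S θ i / u)) hderiv,
    ← Matrix.mul_neg, diagonal_neg]
  congr 2
  funext i
  ring

end Divergence

theorem statement11_general (m k : ℕ)
    (φ : ℝ → ℝ)
    (hφ0 : ContinuousWithinAt φ (Set.Ici 0) 0)
    (hφC2 : ContDiffOn ℝ 2 φ (Set.Ioi (0 : ℝ)))
    (Θ : Set (Fin k → ℝ)) (hΘbd : Bornology.IsBounded Θ)
    (S : (Fin k → ℝ) → (Fin m → ℝ))
    (hScont : ContinuousOn S (closure Θ))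
    (hSinj : Set.InjOn S (closure Θ))
    (hSC2 : ContDiffOn ℝ 2 S (interior Θ))
    (hSrange : ∀ θ ∈ closure Θ, ∀ i, S θ i ∈ Set.Icc (0 : ℝ) 1)
    (hSint : ∀ θ ∈ interior Θ, ∀ i, S θ i ∈ Set.Ioo (0 : ℝ) 1)
    (t0 : Fin m → ℝ)
    (N : Set (Fin m → ℝ)) (hNopen : IsOpen N) (ht0N : t0 ∈ N)
    (hNsub : ∀ t ∈ N, ∀ i, t i ∈ Set.Ioo (0 : ℝ) 1)
    (ϑ : (Fin m → ℝ) → (Fin k → ℝ))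
    (hϑ : ∀ t ∈ N, ϑ t ∈ interior Θ ∧
      ∀ s, IsPhiProjR φ (S '' closure Θ) t s ↔ s = S (ϑ t))
    (hH0 : (hessMatrix (fun θ => DphiR φ (S θ) t0) (ϑ t0)).PosDef) :
    ∃ U : Set (Fin m → ℝ), IsOpen U ∧ t0 ∈ U ∧ U ⊆ N ∧
      ContDiffOn ℝ 1 ϑ U ∧
      jacMatrix ϑ t0 =
        (hessMatrix (fun θ => DphiR φ (S θ) t0) (ϑ t0))⁻¹ *
          (jacMatrix S (ϑ t0))ᵀ *
          Matrix.diagonal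
            (fun i => S (ϑ t0) i / (t0 i) ^ 2 * deriv (deriv φ) (S (ϑ t0) i / t0 i)) := by
  set H := hessMatrix (fun θ => DphiR φ (S θ) t0) (ϑ t0)
  have hN : N ∈ 𝓝 t0 := hNopen.mem_nhds ht0N
  have hNpos : ∀ t ∈ N, ∀ i, 0 < t i := fun t ht i => (hNsub t ht i).1
  have hSpos : ∀ θ ∈ interior Θ, ∀ i, 0 < S θ i := fun θ hθ i => (hSint θ hθ i).1
  have hθ0 : ϑ t0 ∈ interior Θ := (hϑ t0 ht0N).1
  have hφ := hφC2.differentiableOn (by norm_num)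
  have hS := hSC2.differentiableOn (by norm_num)
  have hϑ0 : ∀ᶠ t in 𝓝 t0, divergenceGradient φ S (t, ϑ t) = 0 := by
    filter_upwards [hN] with t ht
    exact divergenceGradient_eq_zero_of_isPhiProjR hφ isOpen_interior hS hSpos
      interior_subset_closure (hNpos t ht) (hϑ t ht).1 (((hϑ t ht).2 _).mpr rfl)
  have hG : ContDiffAt ℝ 1 (divergenceGradient φ S) (t0, ϑ t0) :=
    (contDiffOn_divergenceGradient hφC2 isOpen_interior hSC2 hSpos).contDiffAt
      (prod_mem_nhds (mem_of_superset hN hNpos) (isOpen_interior.mem_nhds hθ0))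
  have hGθ : jacMatrix (fun θ => divergenceGradient φ S (t0, θ)) (ϑ t0) = H := by
    rw [← transpose_transpose (jacMatrix _ _), ← hessMatrix_DphiR_comp hφ isOpen_interior hS
      hSpos (hNpos t0 ht0N) hθ0, ← conjTranspose_eq_transpose_of_trivial,
      hH0.isHermitian.eq]
  have hϑcont : Tendsto ϑ (𝓝 t0) (𝓝 (ϑ t0)) :=
    tendsto_of_isPhiProjR (continuousOn_Ici_of_continuousOn_Ioi hφ0 hφC2.continuousOn)
      hΘbd.isCompact_closure hScont hSinj (fun θ hθ i => (hSrange θ hθ i).1) hN hNpos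
      (fun t ht => interior_subset_closure (hϑ t ht).1) fun t ht => (hϑ t ht).2
  have hϑC1 : ∀ᶠ t in 𝓝 t0, ContDiffAt ℝ 1 ϑ t :=
    eventually_contDiffAt_of_implicit one_ne_zero hG (hGθ ▸ hH0.det_pos.ne') hϑcont
      (by simpa only [hϑ0.self_of_nhds] using hϑ0)
  obtain ⟨U, hU, hUopen, ht0U⟩ := eventually_nhds_iff.mp (hϑC1.and hN)
  refine ⟨U, hUopen, ht0U, fun t ht => (hU t ht).2, fun t ht => (hU t ht).1.contDiffWithinAt, ?_⟩
  have hchain := jacMatrix_partial_add_mul_jacMatrix_eq_zero (hG.differentiableAt one_ne_zero)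
    (hϑC1.self_of_nhds.differentiableAt one_ne_zero) hϑ0
  have hφ' : DifferentiableOn ℝ (deriv φ) (Ioi 0) :=
    (hφC2.deriv_of_isOpen isOpen_Ioi (m := 1) (by norm_num)).differentiableOn one_ne_zero
  rw [jacMatrix_divergenceGradient_fst hφ' (hSpos _ hθ0) (hNpos t0 ht0N), hGθ,
    neg_add_eq_zero] at hchain
  rw [Matrix.mul_assoc, hchain, nonsing_inv_mul_cancel_left _ _ hH0.det_pos.ne'.isUnit]

/-- under the framework assumptions, if on an open neighborhood
`N ⊆ (0,1)^m` of `t0` the `φ`-projection on `M = S(cl Θ)` exists, is unique and is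
of the form `S(θ)` with `θ ∈ int Θ` (so `ϑ*` maps `N` into `int Θ`), and if the
Hessian `H0` of `θ ↦ D_φ(S(θ)∣t0)` at `ϑ*(t0)` is positive definite, then `ϑ*` is
continuously differentiable near `t0` with Jacobian
`J[ϑ*](t0) = H0⁻¹ · J[S](ϑ*(t0))ᵀ · Δ(t0)`,
`Δ(t0) = diag((S_i(ϑ*(t0))/t_{0,i}²) φ''(S_i(ϑ*(t0))/t_{0,i}))`. -/
theorem statement11 (m k : ℕ) (hm : 1 ≤ m) (hk : 1 ≤ k) (hkm : k ≤ m)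
    (φ : ℝ → ℝ)
    (hφconv : ConvexOn ℝ (Set.Ici 0) φ)
    (hφ0 : ContinuousWithinAt φ (Set.Ici 0) 0)
    (hφsc : StrictConvexOn ℝ (Set.Ici (0 : ℝ)) φ)
    (hφC2 : ContDiffOn ℝ 2 φ (Set.Ioi (0 : ℝ)))
    (Θ : Set (Fin k → ℝ)) (hΘbd : Bornology.IsBounded Θ)
    (hΘint : (interior Θ).Nonempty)
    (S : (Fin k → ℝ) → (Fin m → ℝ))
    (hScont : ContinuousOn S (closure Θ))
    (hSinj : Set.InjOn S (closure Θ))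
    (hSC2 : ContDiffOn ℝ 2 S (interior Θ))
    (hSrange : ∀ θ ∈ closure Θ, ∀ i, S θ i ∈ Set.Icc (0 : ℝ) 1)
    (hSint : ∀ θ ∈ interior Θ, ∀ i, S θ i ∈ Set.Ioo (0 : ℝ) 1)
    (t0 : Fin m → ℝ) (ht0 : ∀ i, t0 i ∈ Set.Ioo (0 : ℝ) 1)
    (N : Set (Fin m → ℝ)) (hNopen : IsOpen N) (ht0N : t0 ∈ N)
    (hNsub : ∀ t ∈ N, ∀ i, t i ∈ Set.Ioo (0 : ℝ) 1)
    (ϑ : (Fin m → ℝ) → (Fin k → ℝ))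
    (hϑ : ∀ t ∈ N, ϑ t ∈ interior Θ ∧
      ∀ s, IsPhiProjR φ (S '' closure Θ) t s ↔ s = S (ϑ t))
    (hH0 : (hessMatrix (fun θ => DphiR φ (S θ) t0) (ϑ t0)).PosDef) :
    ∃ U : Set (Fin m → ℝ), IsOpen U ∧ t0 ∈ U ∧ U ⊆ N ∧
      ContDiffOn ℝ 1 ϑ U ∧
      jacMatrix ϑ t0 =
        (hessMatrix (fun θ => DphiR φ (S θ) t0) (ϑ t0))⁻¹ *
          (jacMatrix S (ϑ t0))ᵀ *
          Matrix.diagonal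
            (fun i => S (ϑ t0) i / (t0 i) ^ 2 * deriv (deriv φ) (S (ϑ t0) i / t0 i)) :=
  statement11_general m k φ hφ0 hφC2 Θ hΘbd S hScont hSinj hSC2 hSrange hSint t0 N hNopen ht0N hNsub
    ϑ hϑ hH0
end

section
/- Assume: for every w ∈ (0,∞) the restriction of φ to the interval [0,1/w] is strongly convex; cl(Θ) is convex; and S is affine, i.e., there exist an m×k real matrix A and γ ∈ ℝ^m with S(θ) = Aθ + γ for all θ ∈ cl(Θ). Then for every t ∈ (0,1)^m, the function θ ↦ D_φ(S(θ)∣t) is strongly convex on cl(Θ). -/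
open Filter Topology Matrix

set_option maxHeartbeats 1000000 in
/-- if for every `w > 0` the restriction of `φ` to `[0,1/w]` is
strongly convex, `cl Θ` is convex and `S` is affine (`S(θ) = Aθ + γ`), then for
every `t ∈ (0,1)^m` the function `θ ↦ D_φ(S(θ)∣t)` is strongly convex on `cl Θ`. -/
theorem statement16 (m k : ℕ) (hm : 1 ≤ m) (hk : 1 ≤ k) (hkm : k ≤ m)
    (φ : ℝ → ℝ)
    (hφconv : ConvexOn ℝ (Set.Ici 0) φ)
    (hφ0 : ContinuousWithinAt φ (Set.Ici 0) 0)
    (hφC2 : ContDiffOn ℝ 2 φ (Set.Ioi (0 : ℝ)))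
    (hφstrong : ∀ w : ℝ, 0 < w →
      ∃ κ > 0, StrongConvexOn (Set.Icc (0 : ℝ) (1 / w)) κ φ)
    (Θ : Set (EuclideanSpace ℝ (Fin k))) (hΘbd : Bornology.IsBounded Θ)
    (hΘint : (interior Θ).Nonempty)
    (S : EuclideanSpace ℝ (Fin k) → (Fin m → ℝ))
    (hScont : ContinuousOn S (closure Θ))
    (hSinj : Set.InjOn S (closure Θ))
    (hSint : ∀ θ ∈ interior Θ, ∀ i, S θ i ∈ Set.Ioo (0 : ℝ) 1)
    (hSrange : ∀ θ ∈ closure Θ, ∀ i, S θ i ∈ Set.Icc (0 : ℝ) 1)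
    (hΘconv : Convex ℝ (closure Θ))
    (A : Matrix (Fin m) (Fin k) ℝ) (γ : Fin m → ℝ)
    (hSaff : ∀ θ ∈ closure Θ, S θ = A.mulVec (fun j => θ j) + γ) :
    ∀ t : Fin m → ℝ, (∀ i, t i ∈ Set.Ioo (0 : ℝ) 1) →
      ∃ κ > 0, StrongConvexOn (closure Θ) κ (fun θ => DphiR φ (S θ) t) := by
  intro t ht
  haveI : Nonempty (Fin m) := ⟨⟨0, hm⟩⟩
  choose κi hκipos hκi using fun i : Fin m => hφstrong (t i) (ht i).1
  set κmin : ℝ := Finset.univ.inf' Finset.univ_nonempty κi with hκmindef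
  have hκminpos : 0 < κmin := by
    rw [hκmindef, Finset.lt_inf'_iff]
    exact fun i _ => hκipos i
  have hκminle : ∀ i, κmin ≤ κi i := fun i => Finset.inf'_le _ (Finset.mem_univ i)
  -- the linear part of S
  set L : EuclideanSpace ℝ (Fin k) →ₗ[ℝ] (Fin m → ℝ) :=
    { toFun := fun θ => A.mulVec (fun j => θ j)
      map_add' := fun x y => by
        have h : (fun j => (x + y) j) = (fun j => x j) + (fun j => y j) := rfl
        simp only [h, Matrix.mulVec_add]
      map_smul' := fun c x => by
        have h : (fun j => (c • x) j) = c • (fun j => x j) := rfl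
        simp only [h, Matrix.mulVec_smul, RingHom.id_apply] } with hLdef
  have hLapp : ∀ θ : EuclideanSpace ℝ (Fin k), L θ = A.mulVec (fun j => θ j) := fun _ => rfl
  -- L is injective
  have hker : LinearMap.ker L = ⊥ := by
    rw [LinearMap.ker_eq_bot']
    intro v hv
    by_contra hv0
    obtain ⟨θ0, hθ0⟩ := hΘint
    obtain ⟨ε, hε, hball⟩ := Metric.isOpen_iff.1 isOpen_interior θ0 hθ0
    have hvn : 0 < ‖v‖ := norm_pos_iff.2 hv0
    set c : ℝ := ε / (2 * ‖v‖) with hcdef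
    have hc : 0 < c := by positivity
    set θ1 := θ0 + c • v with hθ1def
    have hθ1 : θ1 ∈ interior Θ := by
      apply hball
      rw [Metric.mem_ball, dist_eq_norm]
      have h1 : θ1 - θ0 = c • v := by rw [hθ1def]; abel
      rw [h1, norm_smul, Real.norm_eq_abs, abs_of_pos hc, hcdef]
      rw [div_mul_eq_mul_div, div_lt_iff₀ (by positivity)]
      nlinarith
    have h0c : θ0 ∈ closure Θ := subset_closure (interior_subset hθ0)
    have h1c : θ1 ∈ closure Θ := subset_closure (interior_subset hθ1)
    have hSeq : S θ1 = S θ0 := by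
      rw [hSaff _ h1c, hSaff _ h0c]
      have h : (fun j => θ1 j) = (fun j => θ0 j) + c • (fun j => v j) := rfl
      rw [h, Matrix.mulVec_add, Matrix.mulVec_smul]
      have hv' : A.mulVec (fun j => v j) = 0 := hv
      rw [hv', smul_zero, add_zero]
    have heq := hSinj h1c h0c hSeq
    have : c • v = 0 := by
      have h2 : θ0 + c • v = θ0 + 0 := by rw [add_zero]; exact heq
      exact add_left_cancel h2
    rcases smul_eq_zero.1 this with h | h
    · exact absurd h (ne_of_gt hc)
    · exact hv0 h
  obtain ⟨K, hK0, hK⟩ := L.exists_antilipschitzWith hker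
  set K' : ℝ := (K : ℝ) + 1 with hK'def
  have hK'pos : (0 : ℝ) < K' := by positivity
  have hKd : ∀ d : EuclideanSpace ℝ (Fin k), ‖d‖ ≤ K' * ‖L d‖ := by
    intro d
    have h1 := hK.le_mul_dist d 0
    rw [dist_zero_right, map_zero, dist_zero_right] at h1
    calc ‖d‖ ≤ (K : ℝ) * ‖L d‖ := h1
      _ ≤ K' * ‖L d‖ := by
        apply mul_le_mul_of_nonneg_right _ (norm_nonneg _)
        rw [hK'def]; linarith
  refine ⟨κmin / K' ^ 2, by positivity, hΘconv, ?_⟩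
  intro x hx y hy a b ha hb hab
  have hxy_mem : a • x + b • y ∈ closure Θ := hΘconv hx hy ha hb hab
  -- affinity of S on the combination
  have hS3 : ∀ i, S (a • x + b • y) i = a * S x i + b * S y i := by
    intro i
    rw [hSaff _ hxy_mem, hSaff _ hx, hSaff _ hy]
    have h : (fun j => (a • x + b • y) j) = a • (fun j => x j) + b • (fun j => y j) := rfl
    rw [h, Matrix.mulVec_add, Matrix.mulVec_smul, Matrix.mulVec_smul]
    simp only [Pi.add_apply, Pi.smul_apply, smul_eq_mul]
    have hb' : b = 1 - a := by linarith
    rw [hb']; ring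
  -- per-coordinate strong convexity estimate
  have hterm : ∀ i : Fin m, t i * φ (S (a • x + b • y) i / t i) ≤
      a * (t i * φ (S x i / t i)) + b * (t i * φ (S y i / t i))
        - a * b * (κmin / 2) * (S x i - S y i) ^ 2 := by
    intro i
    have hti := ht i
    have hxi : S x i / t i ∈ Set.Icc (0 : ℝ) (1 / t i) :=
      ⟨div_nonneg (hSrange x hx i).1 hti.1.le,
        by apply div_le_div_of_nonneg_right (hSrange x hx i).2 hti.1.le⟩
    have hyi : S y i / t i ∈ Set.Icc (0 : ℝ) (1 / t i) :=
      ⟨div_nonneg (hSrange y hy i).1 hti.1.le,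
        by apply div_le_div_of_nonneg_right (hSrange y hy i).2 hti.1.le⟩
    have hs := (hκi i).2 hxi hyi ha hb hab
    simp only [smul_eq_mul, Real.norm_eq_abs] at hs
    have harg : a * (S x i / t i) + b * (S y i / t i) = S (a • x + b • y) i / t i := by
      rw [hS3 i]; ring
    rw [harg] at hs
    have hmul := mul_le_mul_of_nonneg_left hs hti.1.le
    refine hmul.trans ?_
    set r : ℝ := 1 / t i with hrdef
    have hr : t i * r = 1 := by rw [hrdef, mul_one_div, div_self (ne_of_gt hti.1)]
    have hr1 : 1 ≤ r := by
      rw [hrdef, le_div_iff₀ hti.1]; linarith [hti.2]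
    have habs : |S x i / t i - S y i / t i| ^ 2 = ((S x i - S y i) * r) ^ 2 := by
      rw [sq_abs]
      congr 1
      rw [hrdef]; ring
    rw [habs]
    have hab2 : 0 ≤ a * b := mul_nonneg ha hb
    have hΔ : 0 ≤ (S x i - S y i) ^ 2 := sq_nonneg _
    rw [show t i * (a * φ (S x i / t i) + b * φ (S y i / t i)
          - a * b * (κi i / 2 * ((S x i - S y i) * r) ^ 2))
        = a * (t i * φ (S x i / t i)) + b * (t i * φ (S y i / t i))
          - a * b * (κi i / 2) * (S x i - S y i) ^ 2 * r * (t i * r) from by ring,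
      hr, mul_one]
    nlinarith [mul_nonneg (mul_nonneg hab2 hΔ) (sub_nonneg.2 (hκminle i)),
      mul_nonneg (mul_nonneg (mul_nonneg hab2 hΔ) (hκipos i).le) (sub_nonneg.2 hr1)]
  -- sum up
  have hsum : DphiR φ (S (a • x + b • y)) t ≤
      a * DphiR φ (S x) t + b * DphiR φ (S y) t
        - a * b * (κmin / 2) * ∑ i, (S x i - S y i) ^ 2 := by
    unfold DphiR
    calc ∑ i, t i * φ (S (a • x + b • y) i / t i)
        ≤ ∑ i, (a * (t i * φ (S x i / t i)) + b * (t i * φ (S y i / t i))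
            - a * b * (κmin / 2) * (S x i - S y i) ^ 2) := Finset.sum_le_sum fun i _ => hterm i
      _ = _ := by
        rw [Finset.sum_sub_distrib, Finset.sum_add_distrib, ← Finset.mul_sum, ← Finset.mul_sum,
          ← Finset.mul_sum]
  -- relate ∑ (S x i - S y i)^2 to ‖x - y‖^2
  have hΔL : ∀ i, S x i - S y i = L (x - y) i := by
    intro i
    rw [map_sub]
    simp only [Pi.sub_apply]
    rw [hSaff _ hx, hSaff _ hy, hLapp, hLapp]
    simp only [Pi.add_apply]
    ring
  have hnorm2 : ‖L (x - y)‖ ^ 2 ≤ ∑ i, (L (x - y) i) ^ 2 := by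
    have h1 : ‖L (x - y)‖ ≤ Real.sqrt (∑ i, (L (x - y) i) ^ 2) := by
      rw [pi_norm_le_iff_of_nonneg (Real.sqrt_nonneg _)]
      intro i
      rw [Real.norm_eq_abs]
      apply Real.abs_le_sqrt
      exact Finset.single_le_sum (fun j _ => sq_nonneg (L (x - y) j)) (Finset.mem_univ i)
    calc ‖L (x - y)‖ ^ 2 ≤ Real.sqrt (∑ i, (L (x - y) i) ^ 2) ^ 2 :=
          pow_le_pow_left₀ (norm_nonneg _) h1 2
      _ = ∑ i, (L (x - y) i) ^ 2 :=
          Real.sq_sqrt (Finset.sum_nonneg fun i _ => sq_nonneg _)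
  have hd2 : ‖x - y‖ ^ 2 ≤ K' ^ 2 * ∑ i, (S x i - S y i) ^ 2 := by
    have h1 := hKd (x - y)
    have h2 : ‖x - y‖ ^ 2 ≤ (K' * ‖L (x - y)‖) ^ 2 := pow_le_pow_left₀ (norm_nonneg _) h1 2
    have h3 : ∑ i, (S x i - S y i) ^ 2 = ∑ i, (L (x - y) i) ^ 2 := by
      apply Finset.sum_congr rfl; intro i _; rw [hΔL i]
    rw [h3]
    calc ‖x - y‖ ^ 2 ≤ (K' * ‖L (x - y)‖) ^ 2 := h2
      _ = K' ^ 2 * ‖L (x - y)‖ ^ 2 := by ring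
      _ ≤ K' ^ 2 * ∑ i, (L (x - y) i) ^ 2 := by
          apply mul_le_mul_of_nonneg_left hnorm2 (by positivity)
  -- conclude
  have hfinal : a * b * (κmin / K' ^ 2 / 2 * ‖x - y‖ ^ 2) ≤
      a * b * (κmin / 2) * ∑ i, (S x i - S y i) ^ 2 := by
    have hab2 : 0 ≤ a * b := mul_nonneg ha hb
    have h1 : κmin / K' ^ 2 / 2 * ‖x - y‖ ^ 2 ≤ (κmin / 2) * ∑ i, (S x i - S y i) ^ 2 := by
      have h2 : κmin / K' ^ 2 / 2 * ‖x - y‖ ^ 2 ≤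
          κmin / K' ^ 2 / 2 * (K' ^ 2 * ∑ i, (S x i - S y i) ^ 2) :=
        mul_le_mul_of_nonneg_left hd2 (by positivity)
      refine h2.trans_eq ?_
      field_simp
    calc a * b * (κmin / K' ^ 2 / 2 * ‖x - y‖ ^ 2)
        ≤ a * b * ((κmin / 2) * ∑ i, (S x i - S y i) ^ 2) :=
          mul_le_mul_of_nonneg_left h1 hab2
      _ = a * b * (κmin / 2) * ∑ i, (S x i - S y i) ^ 2 := by ring
  show DphiR φ (S (a • x + b • y)) t ≤
      a * DphiR φ (S x) t + b * DphiR φ (S y) t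
        - a * b * (κmin / K' ^ 2 / 2 * ‖x - y‖ ^ 2)
  linarith [hsum, hfinal]
end
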